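/- arXiv:2503.23070 — 5 statements merged into one kernel-verified Lean document; each statement's English description precedes it below -/
import Mathlib

section
/- For every t ∈ ℝ_+^d and n ∈ ℕ_0, the two representations of the multiparameter GCP distribution coincide: p(n,t) = Σ_{(n_1,…,n_d) ∈ Θ(n,d)} ∏_{i=1}^d [ Σ_{(n_{1i},…,n_{ki}) ∈ Ω(k,n_i)} ∏_{j=1}^k ((λ_{ji} t_i)^{n_{ji}}/n_{ji}!) e^{−λ_{ji} t_i} ]. -/
open scoped BigOperators

lemma prod_factorial_ne_zero {d : ℕ} (y : Fin d → ℕ) :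
    (∏ i, (Nat.factorial (y i) : ℝ)) ≠ 0 :=
  Finset.prod_ne_zero_iff.2 fun i _ => Nat.cast_ne_zero.2 (Nat.factorial_ne_zero _)

lemma pow_div_factorial_eq {d : ℕ} (a : Fin d → ℝ) (c : ℕ) :
    (∑ i, a i) ^ c / (Nat.factorial c : ℝ)
      = ∑ y ∈ Finset.piAntidiag Finset.univ c,
          ∏ i, ((a i) ^ (y i) / (Nat.factorial (y i) : ℝ)) := by
  rw [Finset.sum_pow_eq_sum_piAntidiag, Finset.sum_div]
  refine Finset.sum_congr rfl fun y hy => ?_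
  rw [Finset.mem_piAntidiag] at hy
  have hspec := Nat.multinomial_spec Finset.univ y
  rw [hy.1] at hspec
  have hcast : (∏ i, (Nat.factorial (y i) : ℝ)) * (Nat.multinomial Finset.univ y : ℝ)
      = (Nat.factorial c : ℝ) := by exact_mod_cast congrArg (Nat.cast (R := ℝ)) hspec
  rw [Finset.prod_div_distrib]
  have h1 : (∏ i, (Nat.factorial (y i) : ℝ)) ≠ 0 := prod_factorial_ne_zero y
  have h2 : (Nat.factorial c : ℝ) ≠ 0 := Nat.cast_ne_zero.2 (Nat.factorial_ne_zero _)
  field_simp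
  linear_combination (∏ i, (a i) ^ (y i)) * hcast

lemma tsum_ite_wsum {κ : ℕ} (N c : ℕ) (hc : c ≤ N) (g : (Fin κ → ℕ) → ℝ) :
    (∑' x : Fin κ → ℕ, if (∑ j, (j.1 + 1) * x j) = c then g x else 0)
      = ∑ x ∈ Fintype.piFinset (fun _ : Fin κ => Finset.range (N + 1)),
          (if (∑ j, (j.1 + 1) * x j) = c then g x else 0) := by
  refine tsum_eq_sum fun x hx => ?_
  rw [Fintype.mem_piFinset] at hx
  push_neg at hx
  obtain ⟨j, hj⟩ := hx
  rw [Finset.mem_range, not_lt] at hj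
  rw [if_neg]
  intro hcon
  have h2 : (j.1 + 1) * x j ≤ ∑ j', (j'.1 + 1) * x j' :=
    Finset.single_le_sum (f := fun j' : Fin κ => (j'.1 + 1) * x j')
      (fun _ _ => Nat.zero_le _) (Finset.mem_univ j)
  have h1 : x j ≤ (j.1 + 1) * x j := Nat.le_mul_of_pos_left _ (Nat.succ_pos _)
  omega

lemma tsum_ite_sum {κ : ℕ} (c : ℕ) (g : (Fin κ → ℕ) → ℝ) :
    (∑' x : Fin κ → ℕ, if (∑ j, x j) = c then g x else 0)
      = ∑ x ∈ Fintype.piFinset (fun _ : Fin κ => Finset.range (c + 1)),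
          (if (∑ j, x j) = c then g x else 0) := by
  refine tsum_eq_sum fun x hx => ?_
  rw [Fintype.mem_piFinset] at hx
  push_neg at hx
  obtain ⟨j, hj⟩ := hx
  rw [Finset.mem_range, not_lt] at hj
  rw [if_neg]
  intro hcon
  have h2 : x j ≤ ∑ j', x j' :=
    Finset.single_le_sum (f := fun j' : Fin κ => x j')
      (fun _ _ => Nat.zero_le _) (Finset.mem_univ j)
  omega

/-- elementary Poisson factor -/
noncomputable def gcpT {d k : ℕ} (lam : Fin k → Fin d → ℝ) (t : Fin d → ℝ)
    (j : Fin k) (i : Fin d) (c : ℕ) : ℝ :=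
  (lam j i * t i) ^ c / (Nat.factorial c) * Real.exp (-(lam j i * t i))

/-- matrix summand -/
noncomputable def gcpG {d k : ℕ} (lam : Fin k → Fin d → ℝ) (t : Fin d → ℝ) (n : ℕ)
    (y : Fin k → Fin d → ℕ) : ℝ :=
  if (∑ j, (j.1 + 1) * (∑ i, y j i)) = n then ∏ j, ∏ i, gcpT lam t j i (y j i) else 0

/-- The one-dimensional distribution of the multiparameter generalized counting process:
`p(n,t) = Σ_{x ∈ Ω(k,n)} ∏_{j=1}^k ((Λ_j·t)^{x_j}/x_j!) e^{−Λ_j·t}`, where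
`Ω(k,n) = {x ∈ ℕ_0^k : Σ_j j·x_j = n}` (here `j = j.1 + 1` ranges over `1,…,k`). -/
noncomputable def gcpPmf (d k : ℕ) (lam : Fin k → Fin d → ℝ) (n : ℕ) (t : Fin d → ℝ) : ℝ :=
  ∑' x : Fin k → ℕ,
    if (∑ j, (j.1 + 1) * x j) = n then
      ∏ j, ((∑ i, lam j i * t i) ^ (x j) / (Nat.factorial (x j)) *
        Real.exp (-(∑ i, lam j i * t i)))
    else 0

/-- For every `t ∈ ℝ_+^d` and `n ∈ ℕ_0`, the two representations of the multiparameter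
GCP distribution coincide:
`p(n,t) = Σ_{(n_1,…,n_d) ∈ Θ(n,d)} ∏_{i=1}^d
  [ Σ_{(n_{1i},…,n_{ki}) ∈ Ω(k,n_i)} ∏_{j=1}^k ((λ_{ji} t_i)^{n_{ji}}/n_{ji}!) e^{−λ_{ji} t_i} ]`,
where `Θ(n,d) = {(n_1,…,n_d) ∈ ℕ_0^d : Σ_i n_i = n}`. -/
theorem gcpPmf_eq_conv_of_one_param (d k : ℕ) (hd : 1 ≤ d) (hk : 1 ≤ k)
    (lam : Fin k → Fin d → ℝ) (hlam : ∀ j i, 0 < lam j i)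
    (t : Fin d → ℝ) (ht : ∀ i, 0 ≤ t i) (n : ℕ) :
    gcpPmf d k lam n t
      = ∑' m : Fin d → ℕ,
          if (∑ i, m i) = n then
            ∏ i, ∑' x : Fin k → ℕ,
              if (∑ j, (j.1 + 1) * x j) = m i then
                ∏ j, ((lam j i * t i) ^ (x j) / (Nat.factorial (x j)) *
                  Real.exp (-(lam j i * t i)))
              else 0
          else 0 := by
  classical
  -- row expansion via the multinomial theorem
  have key_row : ∀ x : Fin k → ℕ,
      (∏ j, ((∑ i, lam j i * t i) ^ (x j) / (Nat.factorial (x j)) *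
          Real.exp (-(∑ i, lam j i * t i))))
        = ∑ y ∈ Fintype.piFinset (fun j => Finset.piAntidiag Finset.univ (x j)),
            ∏ j, ∏ i, gcpT lam t j i (y j i) := by
    intro x
    have hfac : ∀ j : Fin k,
        ((∑ i, lam j i * t i) ^ (x j) / (Nat.factorial (x j)) *
          Real.exp (-(∑ i, lam j i * t i)))
          = ∑ r ∈ Finset.piAntidiag Finset.univ (x j), ∏ i, gcpT lam t j i (r i) := by
      intro j
      have hexp : Real.exp (-(∑ i, lam j i * t i)) = ∏ i, Real.exp (-(lam j i * t i)) := by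
        rw [← Real.exp_sum]
        congr 1
        simp
      rw [pow_div_factorial_eq (fun i => lam j i * t i) (x j), hexp, Finset.sum_mul]
      refine Finset.sum_congr rfl fun r _ => ?_
      rw [← Finset.prod_mul_distrib]
      exact Finset.prod_congr rfl fun i _ => rfl
    calc (∏ j, ((∑ i, lam j i * t i) ^ (x j) / (Nat.factorial (x j)) *
          Real.exp (-(∑ i, lam j i * t i))))
        = ∏ j, ∑ r ∈ Finset.piAntidiag Finset.univ (x j), ∏ i, gcpT lam t j i (r i) :=
          Finset.prod_congr rfl fun j _ => hfac j
      _ = ∑ y ∈ Fintype.piFinset (fun j => Finset.piAntidiag Finset.univ (x j)),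
            ∏ j, ∏ i, gcpT lam t j i (y j i) :=
          Finset.prod_univ_sum _ _
  -- per-x expansion, absorbing the indicator
  have hstep : ∀ x : Fin k → ℕ,
      (if (∑ j, (j.1 + 1) * x j) = n then
        ∏ j, ((∑ i, lam j i * t i) ^ (x j) / (Nat.factorial (x j)) *
          Real.exp (-(∑ i, lam j i * t i)))
      else 0)
        = ∑ y ∈ Fintype.piFinset (fun j => Finset.piAntidiag Finset.univ (x j)),
            gcpG lam t n y := by
    intro x
    have hrows : ∀ y ∈ Fintype.piFinset (fun j => Finset.piAntidiag Finset.univ (x j)),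
        ∀ j : Fin k, (∑ i : Fin d, y j i) = x j := by
      intro y hy j
      rw [Fintype.mem_piFinset] at hy
      exact (Finset.mem_piAntidiag.1 (hy j)).1
    by_cases hc : (∑ j, (j.1 + 1) * x j) = n
    · rw [if_pos hc]
      refine (key_row x).trans (Finset.sum_congr rfl fun y hy => ?_)
      have hcnd : (∑ j, (j.1 + 1) * (∑ i, y j i)) = n := by
        rw [show (∑ j, (j.1 + 1) * (∑ i, y j i)) = ∑ j, (j.1 + 1) * x j from
          Finset.sum_congr rfl fun j _ => by rw [hrows y hy j]]
        exact hc
      rw [gcpG, if_pos hcnd]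
    · rw [if_neg hc]
      symm
      refine Finset.sum_eq_zero fun y hy => ?_
      rw [gcpG, if_neg]
      intro hcon
      apply hc
      rw [← hcon]
      exact Finset.sum_congr rfl fun j _ => by rw [hrows y hy j]
  -- a matrix with some large row sum contributes zero
  have hGzero : ∀ (y : Fin k → Fin d → ℕ) (j : Fin k), n < (∑ i, y j i) → gcpG lam t n y = 0 := by
    intro y j hj
    rw [gcpG, if_neg]
    intro hcon
    have h2 : (j.1 + 1) * (∑ i, y j i) ≤ ∑ j', (j'.1 + 1) * (∑ i, y j' i) :=
      Finset.single_le_sum (f := fun j' : Fin k => (j'.1 + 1) * (∑ i, y j' i))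
        (fun _ _ => Nat.zero_le _) (Finset.mem_univ j)
    have h1 : (∑ i, y j i) ≤ (j.1 + 1) * (∑ i, y j i) :=
      Nat.le_mul_of_pos_left _ (Nat.succ_pos _)
    omega
  -- reduce LHS to a sum over matrices
  have hL : gcpPmf d k lam n t
      = ∑ y ∈ Fintype.piFinset
          (fun _ : Fin k => Fintype.piFinset (fun _ : Fin d => Finset.range (n + 1))),
        gcpG lam t n y := by
    rw [gcpPmf, tsum_ite_wsum n n le_rfl]
    rw [Finset.sum_congr rfl fun x _ => hstep x]
    rw [show (∑ x ∈ Fintype.piFinset (fun _ : Fin k => Finset.range (n + 1)),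
          ∑ y ∈ Fintype.piFinset (fun j => Finset.piAntidiag Finset.univ (x j)),
            gcpG lam t n y)
        = ∑ x ∈ Fintype.piFinset (fun _ : Fin k => Finset.range (d * n + 1)),
          ∑ y ∈ Fintype.piFinset (fun j => Finset.piAntidiag Finset.univ (x j)),
            gcpG lam t n y from ?_]
    · rw [show (∑ x ∈ Fintype.piFinset (fun _ : Fin k => Finset.range (d * n + 1)),
            ∑ y ∈ Fintype.piFinset (fun j => Finset.piAntidiag Finset.univ (x j)),
              gcpG lam t n y)
          = ∑ x ∈ Fintype.piFinset (fun _ : Fin k => Finset.range (d * n + 1)),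
            ∑ y ∈ (Fintype.piFinset
                (fun _ : Fin k => Fintype.piFinset (fun _ : Fin d => Finset.range (n + 1)))).filter
                  (fun y => (fun j => ∑ i, y j i) = x),
              gcpG lam t n y from ?_]
      · refine Finset.sum_fiberwise_of_maps_to ?_ (gcpG lam t n)
        intro y hy
        rw [Fintype.mem_piFinset] at hy ⊢
        intro j
        rw [Finset.mem_range]
        have hb : ∀ i, y j i ≤ n := by
          intro i
          have h3 := hy j
          rw [Fintype.mem_piFinset] at h3
          have h4 := h3 i
          rw [Finset.mem_range] at h4
          omega
        calc (∑ i, y j i) ≤ ∑ _i : Fin d, n := Finset.sum_le_sum fun i _ => hb i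
          _ = d * n := by simp [Finset.sum_const, Finset.card_univ, mul_comm]
          _ < d * n + 1 := Nat.lt_succ_self _
      · -- fibers agree with the row-antidiagonal sets (or both sums vanish)
        refine Finset.sum_congr rfl fun x hx => ?_
        by_cases hxn : ∀ j, x j ≤ n
        · refine Finset.sum_congr ?_ fun _ _ => rfl
          ext y
          rw [Fintype.mem_piFinset, Finset.mem_filter, Fintype.mem_piFinset]
          constructor
          · intro hy
            have hsum : ∀ j, (∑ i, y j i) = x j := fun j => (Finset.mem_piAntidiag.1 (hy j)).1
            constructor
            · intro j
              rw [Fintype.mem_piFinset]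
              intro i
              rw [Finset.mem_range]
              have h1 : y j i ≤ ∑ i', y j i' :=
                Finset.single_le_sum (f := fun i' : Fin d => y j i')
                  (fun _ _ => Nat.zero_le _) (Finset.mem_univ i)
              have h2 := hsum j
              have h3 := hxn j
              omega
            · exact funext fun j => hsum j
          · rintro ⟨_, hy2⟩ j
            rw [Finset.mem_piAntidiag]
            exact ⟨congrFun hy2 j, fun i _ => Finset.mem_univ i⟩
        · push_neg at hxn
          obtain ⟨j, hj⟩ := hxn
          rw [Finset.sum_eq_zero, Finset.sum_eq_zero]
          · intro y hy
            rw [Finset.mem_filter] at hy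
            exact hGzero y j (by rw [show (∑ i, y j i) = x j from congrFun hy.2 j]; omega)
          · intro y hy
            rw [Fintype.mem_piFinset] at hy
            exact hGzero y j
              (by rw [show (∑ i, y j i) = x j from (Finset.mem_piAntidiag.1 (hy j)).1]; omega)
    · -- enlarge the index cube: extra fibers contribute zero
      refine Finset.sum_subset ?_ ?_
      · refine Fintype.piFinset_subset _ _ fun j => ?_
        intro a ha
        rw [Finset.mem_range] at ha ⊢
        have : n ≤ d * n := Nat.le_mul_of_pos_left n hd
        omega
      · intro x hx' hx
        refine Finset.sum_eq_zero fun y hy => ?_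
        rw [Fintype.mem_piFinset] at hx
        push_neg at hx
        obtain ⟨j, hj⟩ := hx
        rw [Finset.mem_range, not_lt] at hj
        rw [Fintype.mem_piFinset] at hy
        have hmono : n ≤ d * n := Nat.le_mul_of_pos_left n hd
        exact hGzero y j
          (by rw [show (∑ i, y j i) = x j from (Finset.mem_piAntidiag.1 (hy j)).1]; omega)
  -- reduce RHS to a sum over transposed matrices
  have hR : (∑' m : Fin d → ℕ,
          if (∑ i, m i) = n then
            ∏ i, ∑' x : Fin k → ℕ,
              if (∑ j, (j.1 + 1) * x j) = m i then
                ∏ j, ((lam j i * t i) ^ (x j) / (Nat.factorial (x j)) *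
                  Real.exp (-(lam j i * t i)))
              else 0
          else 0)
      = ∑ z ∈ Fintype.piFinset
          (fun _ : Fin d => Fintype.piFinset (fun _ : Fin k => Finset.range (n + 1))),
          (if (∑ i, ∑ j, (j.1 + 1) * z i j) = n then ∏ i, ∏ j, gcpT lam t j i (z i j) else 0) := by
    rw [tsum_ite_sum n]
    calc
      (∑ m ∈ Fintype.piFinset (fun _ : Fin d => Finset.range (n + 1)),
          if (∑ i, m i) = n then
            ∏ i, ∑' x : Fin k → ℕ,
              if (∑ j, (j.1 + 1) * x j) = m i then
                ∏ j, ((lam j i * t i) ^ (x j) / (Nat.factorial (x j)) *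
                  Real.exp (-(lam j i * t i)))
              else 0
          else 0)
          = ∑ m ∈ Fintype.piFinset (fun _ : Fin d => Finset.range (n + 1)),
              (if (∑ i, m i) = n then
                ∏ i, ∑ x ∈ Fintype.piFinset (fun _ : Fin k => Finset.range (n + 1)),
                  (if (∑ j, (j.1 + 1) * x j) = m i then ∏ j, gcpT lam t j i (x j) else 0)
              else 0) := by
        refine Finset.sum_congr rfl fun m _ => ?_
        by_cases hmn : (∑ i, m i) = n
        · rw [if_pos hmn, if_pos hmn]
          refine Finset.prod_congr rfl fun i _ => ?_
          have hmi : m i ≤ n := by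
            have h1 : m i ≤ ∑ i', m i' :=
              Finset.single_le_sum (f := fun i' : Fin d => m i')
                (fun _ _ => Nat.zero_le _) (Finset.mem_univ i)
            omega
          exact tsum_ite_wsum n (m i) hmi _
        · rw [if_neg hmn, if_neg hmn]
      _ = ∑ m ∈ Fintype.piFinset (fun _ : Fin d => Finset.range (n + 1)),
            (if (∑ i, m i) = n then
              (∑ z ∈ Fintype.piFinset
                  (fun _ : Fin d => Fintype.piFinset (fun _ : Fin k => Finset.range (n + 1))),
                if (∀ i, (∑ j, (j.1 + 1) * z i j) = m i)
                  then ∏ i, ∏ j, gcpT lam t j i (z i j) else 0)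
            else 0) := by
        refine Finset.sum_congr rfl fun m _ => ?_
        rw [Finset.prod_univ_sum]
        congr 1
        refine Finset.sum_congr rfl fun z _ => ?_
        refine Fintype.prod_ite_zero.trans ?_
        congr
      _ = ∑ z ∈ Fintype.piFinset
              (fun _ : Fin d => Fintype.piFinset (fun _ : Fin k => Finset.range (n + 1))),
            ∑ m ∈ Fintype.piFinset (fun _ : Fin d => Finset.range (n + 1)),
            (if m = (fun i => ∑ j, (j.1 + 1) * z i j) then
              (if (∑ i, ∑ j, (j.1 + 1) * z i j) = n then ∏ i, ∏ j, gcpT lam t j i (z i j) else 0)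
            else 0) := by
        rw [Finset.sum_comm]
        refine Finset.sum_congr rfl fun m _ => ?_
        by_cases hmn : (∑ i, m i) = n
        · rw [if_pos hmn]
          refine Finset.sum_congr rfl fun z _ => ?_
          by_cases hz : m = (fun i => ∑ j, (j.1 + 1) * z i j)
          · rw [if_pos hz]
            have hall : ∀ i, (∑ j, (j.1 + 1) * z i j) = m i := fun i => (congrFun hz i).symm
            rw [if_pos hall, if_pos]
            rw [← hmn]
            exact Finset.sum_congr rfl fun i _ => (hall i)
          · rw [if_neg hz, if_neg]
            intro hall
            exact hz (funext fun i => (hall i).symm)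
        · rw [if_neg hmn]
          symm
          refine Finset.sum_eq_zero fun z _ => ?_
          by_cases hz : m = (fun i => ∑ j, (j.1 + 1) * z i j)
          · rw [if_pos hz, if_neg]
            intro hcon
            apply hmn
            rw [hz]
            exact hcon
          · rw [if_neg hz]
      _ = ∑ z ∈ Fintype.piFinset
              (fun _ : Fin d => Fintype.piFinset (fun _ : Fin k => Finset.range (n + 1))),
            (if (∑ i, ∑ j, (j.1 + 1) * z i j) = n
              then ∏ i, ∏ j, gcpT lam t j i (z i j) else 0) := by
        refine Finset.sum_congr rfl fun z _ => ?_
        rw [Finset.sum_ite_eq' (Fintype.piFinset (fun _ : Fin d => Finset.range (n + 1)))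
          (fun i => ∑ j, (j.1 + 1) * z i j)]
        by_cases hg : (∑ i, ∑ j, (j.1 + 1) * z i j) = n
        · rw [if_pos]
          rw [Fintype.mem_piFinset]
          intro i
          rw [Finset.mem_range]
          have h1 : (∑ j, (j.1 + 1) * z i j) ≤ ∑ i', ∑ j, (j.1 + 1) * z i' j :=
            Finset.single_le_sum (f := fun i' : Fin d => ∑ j, (j.1 + 1) * z i' j)
              (fun _ _ => Nat.zero_le _) (Finset.mem_univ i)
          omega
        · rw [if_neg hg]
          exact ite_self 0
  rw [hL, hR]
  -- final reindexing: transpose the matrix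
  refine Finset.sum_nbij' (fun y => fun i j => y j i) (fun z => fun j i => z i j) ?_ ?_ ?_ ?_ ?_
  · intro y hy
    rw [Fintype.mem_piFinset] at hy ⊢
    intro i
    rw [Fintype.mem_piFinset]
    intro j
    have h3 := hy j
    rw [Fintype.mem_piFinset] at h3
    exact h3 i
  · intro z hz
    rw [Fintype.mem_piFinset] at hz ⊢
    intro j
    rw [Fintype.mem_piFinset]
    intro i
    have h3 := hz i
    rw [Fintype.mem_piFinset] at h3
    exact h3 j
  · intro y _
    rfl
  · intro z _
    rfl
  · intro y hy
    rw [gcpG]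
    have hcond : (∑ j : Fin k, (j.1 + 1) * (∑ i, y j i)) = ∑ i, ∑ j : Fin k, (j.1 + 1) * y j i := by
      rw [show (∑ j : Fin k, (j.1 + 1) * (∑ i, y j i))
          = ∑ j : Fin k, ∑ i, (j.1 + 1) * y j i from
        Finset.sum_congr rfl fun j _ => Finset.mul_sum _ _ _]
      exact Finset.sum_comm
    rw [hcond]
    by_cases hc : (∑ i, ∑ j : Fin k, (j.1 + 1) * y j i) = n
    · rw [if_pos hc, if_pos hc]
      exact Finset.prod_comm
    · rw [if_neg hc, if_neg hc]
end

section
/- Let M_1, …, M_d be independent one-parameter counting processes. The multiparameter process 𝓜(t) := M_1(t_1) + M_2(t_2) + ⋯ + M_d(t_d), t = (t_1,…,t_d) ∈ ℝ_+^d, is a multiparameter GCP with transition rates Λ_1, …, Λ_k if and only if for each i = 1, …, d the process M_i is a generalized counting process (GCP) with positive rates λ_{1i}, …, λ_{ki}. -/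
open scoped BigOperators
open MeasureTheory ProbabilityTheory

/-- The one-dimensional distribution of the one-parameter GCP with positive rates
`λ_1,…,λ_k`: `Pr(M(s) = n) = Σ_{x ∈ Ω(k,n)} ∏_j ((λ_j s)^{x_j}/x_j!) e^{−λ_j s}`. -/
noncomputable def gcp1Pmf (k : ℕ) (lamv : Fin k → ℝ) (n : ℕ) (s : ℝ) : ℝ :=
  ∑' x : Fin k → ℕ,
    if (∑ j, (j.1 + 1) * x j) = n then
      ∏ j, ((lamv j * s) ^ (x j) / (Nat.factorial (x j)) * Real.exp (-(lamv j * s)))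
    else 0

/-- A one-parameter counting process: `M(0) = 0` and `M(s) ≤ M(s')` for `0 ≤ s ≤ s'`. -/
def IsCounting1 {Ω : Type*} (M : ℝ → Ω → ℕ) : Prop :=
  (∀ ω, M 0 ω = 0) ∧ ∀ s s' : ℝ, 0 ≤ s → s ≤ s' → ∀ ω, M s ω ≤ M s' ω

/-- Independent increments for a one-parameter process. -/
def HasIndepIncrements1 {Ω : Type*} [MeasurableSpace Ω] (μ : Measure Ω)
    (M : ℝ → Ω → ℕ) : Prop :=
  ∀ (m : ℕ) (ts : Fin (m + 1) → ℝ), ts 0 = 0 → (∀ i : Fin m, ts i.castSucc < ts i.succ) →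
    iIndepFun
      (fun (i : Fin m) (ω : Ω) => M (ts i.succ) ω - M (ts i.castSucc) ω) μ

/-- Stationary increments for a one-parameter process. -/
def HasStatIncrements1 {Ω : Type*} [MeasurableSpace Ω] (μ : Measure Ω)
    (M : ℝ → Ω → ℕ) : Prop :=
  ∀ s s' : ℝ, 0 ≤ s → s ≤ s' →
    μ.map (fun ω => M s' ω - M s ω) = μ.map (M (s' - s))

/-- A generalized counting process (GCP) with positive rates `λ_1,…,λ_k`: a one-parameter
counting process with independent and stationary increments whose one-dimensional
distributions are those of the GCP. -/
def IsGCP {Ω : Type*} [MeasurableSpace Ω] (μ : Measure Ω) (k : ℕ)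
    (lamv : Fin k → ℝ) (M : ℝ → Ω → ℕ) : Prop :=
  IsCounting1 M ∧ HasIndepIncrements1 μ M ∧ HasStatIncrements1 μ M ∧
    ∀ s : ℝ, 0 ≤ s → ∀ n : ℕ, μ {ω | M s ω = n} = ENNReal.ofReal (gcp1Pmf k lamv n s)

/-- A multiparameter counting process. -/
def IsMultiCounting {Ω : Type*} (d : ℕ) (N : (Fin d → ℝ) → Ω → ℕ) : Prop :=
  (∀ ω, N 0 ω = 0) ∧ ∀ s t : Fin d → ℝ, 0 ≤ s → s ≤ t → ∀ ω, N s ω ≤ N t ω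

/-- Independent increments for a multiparameter process. -/
def HasIndepIncrements {Ω : Type*} [MeasurableSpace Ω] (μ : Measure Ω) (d : ℕ)
    (N : (Fin d → ℝ) → Ω → ℕ) : Prop :=
  ∀ (m : ℕ) (ts : Fin (m + 1) → Fin d → ℝ), ts 0 = 0 →
    (∀ i : Fin m, ts i.castSucc < ts i.succ) →
    iIndepFun
      (fun (i : Fin m) (ω : Ω) => N (ts i.succ) ω - N (ts i.castSucc) ω) μ

/-- Stationary increments for a multiparameter process. -/
def HasStatIncrements {Ω : Type*} [MeasurableSpace Ω] (μ : Measure Ω) (d : ℕ)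
    (N : (Fin d → ℝ) → Ω → ℕ) : Prop :=
  ∀ s t : Fin d → ℝ, 0 ≤ s → s ≤ t →
    μ.map (fun ω => N t ω - N s ω) = μ.map (N (t - s))

/-- A multiparameter GCP with transition rates `Λ_1,…,Λ_k`. -/
def IsMultiGCP {Ω : Type*} [MeasurableSpace Ω] (μ : Measure Ω) (d k : ℕ)
    (lam : Fin k → Fin d → ℝ) (M : (Fin d → ℝ) → Ω → ℕ) : Prop :=
  IsMultiCounting d M ∧ HasIndepIncrements μ d M ∧ HasStatIncrements μ d M ∧
    ∀ t : Fin d → ℝ, 0 ≤ t → ∀ n : ℕ,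
      μ {ω | M t ω = n} = ENNReal.ofReal (gcpPmf d k lam n t)

/-!
Along a coordinate axis `t = s • eᵢ` the sum process is `Mᵢ` itself, which gives the forward
direction. Conversely, a GCP variable with rates `r₁, …, r_k` has the law of `∑ⱼ j Nⱼ` for
independent `Nⱼ ~ Po(rⱼ)` (`gcpMeasure`). Realising the independent summands `Mᵢ(tᵢ)` through a
Poisson matrix `N i j`, the regrouping `∑ᵢ ∑ⱼ j N i j = ∑ⱼ j ∑ᵢ N i j` turns their sum into a
GCP variable with rates `Λⱼ·t`, since independent Poisson variables add. Along a chain, the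
increments of the sum are sums over `i` of the increments of `Mᵢ` along the coordinate chains;
these are independent jointly in `(i, n)`, a tie in a coordinate chain contributing only the
constant increment `0`.
-/

open scoped NNReal ENNReal

namespace ProbabilityTheory

section Independence

variable {Ω β : Type*} [MeasurableSpace Ω] [MeasurableSpace β] {μ : Measure Ω}

lemma iIndepFun.curry {ι κ : Type*} {X : ι → κ → Ω → β} (mX : ∀ i j, Measurable (X i j))
    (h : iIndepFun (fun p : ι × κ => X p.1 p.2) μ) :
    iIndepFun (fun i ω j => X i j ω) μ := by
  have := h.isProbabilityMeasure
  have : ∀ i j, IsProbabilityMeasure (μ.map (X i j)) :=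
    fun i j => Measure.isProbabilityMeasure_map (mX i j).aemeasurable
  have hblock : ∀ i, μ.map (fun ω j => X i j ω) = Measure.infinitePi fun j => μ.map (X i j) :=
    fun i => (h.precomp (Prod.mk_right_injective i)).map_fun_eq_infinitePi_map (fun j => mX i j)
  have hpairs : μ.map (fun ω (p : ι × κ) => X p.1 p.2 ω) =
      Measure.infinitePi fun p : ι × κ => μ.map (X p.1 p.2) :=
    h.map_fun_eq_infinitePi_map fun p : ι × κ => mX p.1 p.2
  have hcurry : (fun ω i j => X i j ω) = MeasurableEquiv.curry ι κ β ∘ fun ω p => X p.1 p.2 ω :=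
    rfl
  rw [iIndepFun_iff_map_fun_eq_infinitePi_map (by fun_prop), hcurry,
    ← Measure.map_map (by fun_prop) (by fun_prop), hpairs,
    Measure.infinitePi_map_curry fun i j => μ.map (X i j)]
  simp only [hblock]

lemma iIndepFun.transpose {ι κ : Type*} {X : ι → κ → Ω → β} (mX : ∀ i j, Measurable (X i j))
    (hblock : iIndepFun (fun i ω j => X i j ω) μ) (hrow : ∀ i, iIndepFun (X i) μ) :
    iIndepFun (fun j ω i => X i j ω) μ :=
  iIndepFun.curry (fun j i => mX i j)
    ((iIndepFun_uncurry' mX hblock hrow).precomp (Equiv.prodComm κ ι).injective)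

lemma iIndepFun.of_succAbove_const {m : ℕ} {F : Fin (m + 1) → Ω → β}
    (mF : ∀ n, Measurable (F n)) (p : Fin (m + 1)) (c : β) (hp : F p = fun _ => c)
    (h : iIndepFun (fun r => F (p.succAbove r)) μ) : iIndepFun F μ := by
  have := h.isProbabilityMeasure
  rw [iIndepFun_iff_map_fun_eq_pi_map (fun n => (mF n).aemeasurable)]
  let e := MeasurableEquiv.piFinSuccAbove (fun _ => β) p
  refine e.map_measurableEquiv_injective ?_
  rw [(measurePreserving_piFinSuccAbove (fun n => μ.map (F n)) p).map_eq,
    Measure.map_map e.measurable (by fun_prop), hp, Measure.map_const, measure_univ, one_smul,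
    Measure.dirac_prod, ← h.map_fun_eq_pi_map fun r => (mF _).aemeasurable,
    Measure.map_map (by fun_prop) (by fun_prop)]
  congr 1
  funext ω
  exact Prod.ext (congrFun hp ω) rfl

end Independence

lemma poissonMeasure_zero : poissonMeasure 0 = Measure.dirac 0 := by
  refine Measure.ext_of_singleton fun n => ?_
  cases n <;> simp [poissonMeasure_singleton]

lemma iIndepFun.hasLaw_sum_poissonMeasure {Ω ι : Type*} [MeasurableSpace Ω] {μ : Measure Ω}
    {X : ι → Ω → ℕ} {r : ι → ℝ≥0} (hX : iIndepFun X μ) (mX : ∀ i, Measurable (X i))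
    (hlaw : ∀ i, HasLaw (X i) Po(r i) μ) (s : Finset ι) :
    HasLaw (∑ i ∈ s, X i) Po(∑ i ∈ s, r i) μ := by
  classical
  have := hX.isProbabilityMeasure
  induction s using Finset.induction_on with
  | empty =>
    simpa [poissonMeasure_zero] using hasLaw_dirac_of_ae_eq (P := μ) (X := 0) (x := 0) (by rfl)
  | insert a s ha ih =>
    rw [Finset.sum_insert ha, Finset.sum_insert ha, add_comm, add_comm (r a)]
    exact (hX.indepFun_finsetSum_of_notMem mX ha).hasLaw_add_poissonMeasure ih (hlaw a)

end ProbabilityTheory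

noncomputable def gcpMeasure {k : ℕ} (r : Fin k → ℝ≥0) : Measure ℕ :=
  (Measure.pi fun j => poissonMeasure (r j)).map fun x => ∑ j, (j.1 + 1) * x j

lemma mem_piFinset_of_sum_succ_mul_eq {k n : ℕ} {x : Fin k → ℕ}
    (h : ∑ j, (j.1 + 1) * x j = n) : x ∈ Fintype.piFinset fun _ => Finset.range (n + 1) := by
  refine Fintype.mem_piFinset.2 fun j => Finset.mem_range_succ_iff.2 ?_
  calc x j ≤ (j.1 + 1) * x j := Nat.le_mul_of_pos_left _ j.1.succ_pos
    _ ≤ ∑ j, (j.1 + 1) * x j :=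
      Finset.single_le_sum (f := fun j => (j.1 + 1) * x j) (fun j _ => Nat.zero_le _)
        (Finset.mem_univ j)
    _ = n := h

lemma gcpMeasure_singleton {k : ℕ} (r : Fin k → ℝ≥0) (n : ℕ) :
    gcpMeasure r {n} = ENNReal.ofReal (∑' x : Fin k → ℕ,
      if ∑ j, (j.1 + 1) * x j = n then
        ∏ j, ((r j : ℝ) ^ x j / (x j).factorial * Real.exp (-(r j : ℝ)))
      else 0) := by
  have hterm_nonneg : ∀ x : Fin k → ℕ, 0 ≤ (if ∑ j, (j.1 + 1) * x j = n then
      ∏ j, ((r j : ℝ) ^ x j / (x j).factorial * Real.exp (-(r j : ℝ))) else 0) := by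
    intro x
    split_ifs
    · positivity
    · exact le_rfl
  rw [gcpMeasure, Measure.map_apply (measurable_of_countable _) (measurableSet_singleton n),
    ← Measure.tsum_indicator_apply_singleton _ _
      (measurableSet_singleton n |>.preimage (measurable_of_countable _)),
    ENNReal.ofReal_tsum_of_nonneg hterm_nonneg (summable_of_ne_finset_zero fun x hx =>
      if_neg fun h => hx (mem_piFinset_of_sum_succ_mul_eq h))]
  refine tsum_congr fun x => ?_
  by_cases hx : ∑ j, (j.1 + 1) * x j = n
  · rw [Set.indicator, if_pos (by exact hx), if_pos hx, Measure.pi_singleton,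
      ENNReal.ofReal_prod_of_nonneg fun j _ => by positivity]
    refine Finset.prod_congr rfl fun j _ => ?_
    rw [poissonMeasure_singleton]
    ring_nf
  · rw [Set.indicator, if_neg (by exact hx), if_neg hx, ENNReal.ofReal_zero]

lemma ofReal_gcp1Pmf {k : ℕ} {lamv : Fin k → ℝ} {s : ℝ} (h : ∀ j, 0 ≤ lamv j * s) (n : ℕ) :
    ENNReal.ofReal (gcp1Pmf k lamv n s) = gcpMeasure (fun j => (lamv j * s).toNNReal) {n} := by
  simp only [gcpMeasure_singleton, Real.coe_toNNReal _ (h _)]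
  rfl

lemma ofReal_gcpPmf {d k : ℕ} {lam : Fin k → Fin d → ℝ} {t : Fin d → ℝ}
    (h : ∀ j i, 0 ≤ lam j i * t i) (n : ℕ) :
    ENNReal.ofReal (gcpPmf d k lam n t) =
      gcpMeasure (∑ i, fun j => (lam j i * t i).toNNReal) {n} := by
  simp only [gcpMeasure_singleton, Finset.sum_apply, NNReal.coe_sum, Real.coe_toNNReal _ (h _ _)]
  rfl

lemma gcpPmf_single {d k : ℕ} (lam : Fin k → Fin d → ℝ) (i : Fin d) (n : ℕ) (s : ℝ) :
    gcpPmf d k lam n (Pi.single i s) = gcp1Pmf k (fun j => lam j i) n s := by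
  simp only [gcpPmf, gcp1Pmf, Pi.single_apply, mul_ite, mul_zero, Finset.sum_ite_eq',
    Finset.mem_univ, if_true]

namespace ProbabilityTheory

variable {Ω : Type*} [MeasurableSpace Ω] {μ : Measure Ω}

lemma hasLaw_iff_forall_measure_eq {X : Ω → ℕ} (hX : Measurable X) {ν : Measure ℕ} :
    HasLaw X ν μ ↔ ∀ n, μ {ω | X ω = n} = ν {n} :=
  ⟨fun h n => h.measure_eq (measurableSet_singleton n),
    fun h => ⟨hX.aemeasurable, Measure.ext_of_singleton fun n => by
      rw [Measure.map_apply hX (measurableSet_singleton n)]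
      exact h n⟩⟩

lemma iIndepFun.hasLaw_gcpMeasure {k : ℕ} {N : Fin k → Ω → ℕ} {r : Fin k → ℝ≥0}
    (hN : iIndepFun N μ) (hlaw : ∀ j, HasLaw (N j) Po(r j) μ) :
    HasLaw (fun ω => ∑ j, (j.1 + 1) * N j ω) (gcpMeasure r) μ :=
  HasLaw.comp (Y := fun x : Fin k → ℕ => ∑ j, (j.1 + 1) * x j) (X := fun ω j => N j ω)
    ⟨(measurable_of_countable _).aemeasurable, rfl⟩ (hN.hasLaw_pi hlaw)

lemma map_sum_pi_gcpMeasure {ι : Type*} [Fintype ι] {k : ℕ} (r : ι → Fin k → ℝ≥0) :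
    (Measure.pi fun i => gcpMeasure (r i)).map (fun v => ∑ i, v i) = gcpMeasure (∑ i, r i) := by
  -- Realise both sides on a matrix of independent Poisson variables `ω (i, j) ~ Po(r i j)`,
  -- summing it by rows on the left and by columns on the right.
  let P := Measure.pi fun p : ι × Fin k => Po(r p.1 p.2)
  have hcoord : iIndepFun (fun p (ω : ι × Fin k → ℕ) => ω p) P :=
    iIndepFun_pi fun _ => measurable_id.aemeasurable
  have hlaw : ∀ p, HasLaw (fun ω : ι × Fin k → ℕ => ω p) Po(r p.1 p.2) P :=
    fun p => (measurePreserving_eval (fun p : ι × Fin k => Po(r p.1 p.2)) p).hasLaw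
  have hrows : HasLaw (fun ω i => ∑ j, (j.1 + 1) * ω (i, j))
      (Measure.pi fun i => gcpMeasure (r i)) P := by
    refine iIndepFun.hasLaw_pi (fun i => ?_) ?_
    · exact (hcoord.precomp (Prod.mk_right_injective i)).hasLaw_gcpMeasure fun j => hlaw (i, j)
    · exact (hcoord.curry (X := fun i j (ω : ι × Fin k → ℕ) => ω (i, j))
        fun _ _ => measurable_pi_apply _).comp
        (fun _ x => ∑ j, (j.1 + 1) * x j) fun _ => measurable_of_countable _
  have hcols : HasLaw (fun ω => ∑ j, (j.1 + 1) * ∑ i, ω (i, j)) (gcpMeasure (∑ i, r i)) P := by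
    rw [Finset.sum_fn]
    refine iIndepFun.hasLaw_gcpMeasure ?_ fun j => ?_
    · exact ((hcoord.precomp (Equiv.prodComm (Fin k) ι).injective).curry
        (X := fun j i (ω : ι × Fin k → ℕ) => ω (i, j)) fun _ _ => measurable_pi_apply _).comp
        (fun _ x => ∑ i, x i) fun _ => measurable_of_countable _
    · have := (hcoord.precomp (Prod.mk_left_injective j)).hasLaw_sum_poissonMeasure
        (fun _ => measurable_pi_apply _) (fun i => hlaw (i, j)) Finset.univ
      simpa only [Finset.sum_fn] using this
  have hregroup : (fun ω : ι × Fin k → ℕ => ∑ j, (j.1 + 1) * ∑ i, ω (i, j))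
      = (fun v => ∑ i, v i) ∘ fun ω i => ∑ j, (j.1 + 1) * ω (i, j) := by
    funext ω
    simp only [Function.comp_apply, Finset.mul_sum]
    exact Finset.sum_comm
  rw [← hcols.map_eq, ← hrows.map_eq, Measure.map_map (measurable_of_countable _)
    (measurable_of_countable _), hregroup]

lemma iIndepFun.hasLaw_sum_gcpMeasure {ι : Type*} [Fintype ι] {k : ℕ} {Y : ι → Ω → ℕ}
    {r : ι → Fin k → ℝ≥0} (hY : iIndepFun Y μ)
    (hlaw : ∀ i, HasLaw (Y i) (gcpMeasure (r i)) μ) :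
    HasLaw (fun ω => ∑ i, Y i ω) (gcpMeasure (∑ i, r i)) μ :=
  HasLaw.comp (Y := fun v : ι → ℕ => ∑ i, v i) (X := fun ω i => Y i ω)
    ⟨(measurable_of_countable _).aemeasurable, map_sum_pi_gcpMeasure r⟩ (hY.hasLaw_pi hlaw)

end ProbabilityTheory

lemma Fin.apply_succ_succAbove_castSucc {α : Type*} {m : ℕ} {ts : Fin (m + 2) → α}
    {p : Fin (m + 1)} (hp : ts p.castSucc = ts p.succ) (r : Fin m) :
    ts (p.succ.succAbove r.castSucc) = ts (p.succAbove r).castSucc := by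
  rcases lt_trichotomy r.castSucc p with h | h | h
  · rw [Fin.succAbove_of_castSucc_lt _ _ h, Fin.succAbove_of_castSucc_lt]
    exact Fin.castSucc_lt_succ_iff.2 h.le
  · rw [Fin.succAbove_of_le_castSucc _ _ h.ge, Fin.succAbove_of_castSucc_lt, ← Fin.succ_castSucc,
      h, hp]
    exact h ▸ Fin.castSucc_lt_succ (i := r.castSucc)
  · rw [Fin.succAbove_of_le_castSucc _ _ h.le, Fin.succAbove_of_le_castSucc, Fin.succ_castSucc]
    exact Fin.succ_le_castSucc_iff.2 h

lemma HasIndepIncrements1.iIndepFun_of_le_succ {Ω : Type*} [MeasurableSpace Ω] {μ : Measure Ω}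
    {M : ℝ → Ω → ℕ} (hM : HasIndepIncrements1 μ M) (mM : ∀ s, Measurable (M s)) {m : ℕ}
    (ts : Fin (m + 1) → ℝ) (h0 : ts 0 = 0) (hle : ∀ n : Fin m, ts n.castSucc ≤ ts n.succ) :
    iIndepFun (fun (n : Fin m) ω => M (ts n.succ) ω - M (ts n.castSucc) ω) μ := by
  induction m with
  | zero => exact hM 0 ts h0 fun n => n.elim0
  | succ m ih =>
    by_cases hlt : ∀ n : Fin (m + 1), ts n.castSucc < ts n.succ
    · exact hM _ ts h0 hlt
    obtain ⟨p, hp⟩ := not_forall.1 hlt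
    have htie : ts p.castSucc = ts p.succ := le_antisymm (hle p) (not_lt.1 hp)
    have hsucc : ∀ r : Fin m, ts (p.succ.succAbove r.succ) = ts (p.succAbove r).succ := by simp
    refine iIndepFun.of_succAbove_const (fun n => (mM _).sub (mM _)) p 0
      (by funext ω; rw [htie, Nat.sub_self]) ?_
    -- Away from `p`, the increments of `ts` are those of the chain without the point `ts p.succ`.
    have := ih (ts ∘ p.succ.succAbove) (by simp [h0]) fun r => by
      simpa only [Function.comp_apply, hsucc, Fin.apply_succ_succAbove_castSucc htie] using hle _
    simpa only [Function.comp_apply, hsucc, Fin.apply_succ_succAbove_castSucc htie] using this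

lemma IsMultiGCP.isGCP_single {Ω : Type*} [MeasurableSpace Ω] {μ : Measure Ω} {d k : ℕ}
    {lam : Fin k → Fin d → ℝ} {N : (Fin d → ℝ) → Ω → ℕ} (hN : IsMultiGCP μ d k lam N)
    (i : Fin d) : IsGCP μ k (fun j => lam j i) (fun s => N (Pi.single i s)) := by
  obtain ⟨⟨hzero, hmono⟩, hinc, hstat, hlaw⟩ := hN
  refine ⟨⟨by simpa only [Pi.single_zero] using hzero,
      fun s s' hs hss' => hmono _ _ (by simpa using hs) (Pi.single_mono i hss')⟩,
    fun m ts h0 hlt => hinc m (fun n => Pi.single i (ts n)) (by simp only [h0, Pi.single_zero])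
      fun n => Pi.single_strictMono i (hlt n),
    fun s s' hs hss' => ?_, fun s hs n => ?_⟩
  · rw [hstat _ _ (by simpa using hs) (Pi.single_mono i hss'), ← Pi.single_sub]
  · rw [hlaw _ (by simpa using hs), gcpPmf_single]

section SumOfProcesses

variable {Ω : Type*} {d : ℕ} {M : Fin d → ℝ → Ω → ℕ}

lemma sum_apply_single_eq (hzero : ∀ i ω, M i 0 ω = 0) (i : Fin d) (s : ℝ) (ω : Ω) :
    ∑ i', M i' ((Pi.single i s : Fin d → ℝ) i') ω = M i s ω := by
  rw [Fintype.sum_eq_single i fun i' hi' => by rw [Pi.single_eq_of_ne hi', hzero],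
    Pi.single_eq_same]

lemma isMultiCounting_sum (hcount : ∀ i, IsCounting1 (M i)) :
    IsMultiCounting d fun t ω => ∑ i, M i (t i) ω :=
  ⟨fun ω => Finset.sum_eq_zero fun i _ => (hcount i).1 ω,
    fun _ _ hs hst ω => Finset.sum_le_sum fun i _ => (hcount i).2 _ _ (hs i) (hst i) ω⟩

lemma sum_sub_sum_eq_sum_sub (hcount : ∀ i, IsCounting1 (M i)) {s t : Fin d → ℝ} (hs : 0 ≤ s)
    (hst : s ≤ t) (ω : Ω) :
    ∑ i, M i (t i) ω - ∑ i, M i (s i) ω = ∑ i, (M i (t i) ω - M i (s i) ω) :=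
  (Finset.sum_tsub_distrib _ fun i _ => (hcount i).2 _ _ (hs i) (hst i) ω).symm

variable [MeasurableSpace Ω] {μ : Measure Ω}

lemma hasIndepIncrements_sum (mM : ∀ i s, Measurable (M i s)) (hcount : ∀ i, IsCounting1 (M i))
    (hindep : iIndepFun (fun i ω s => M i s ω) μ) (hinc : ∀ i, HasIndepIncrements1 μ (M i)) :
    _root_.HasIndepIncrements μ d fun t ω => ∑ i, M i (t i) ω := by
  intro m ts h0 hlt
  have hle : Monotone ts := Fin.monotone_iff_le_succ.2 fun n => (hlt n).le
  have hnonneg : ∀ n, 0 ≤ ts n := fun n => h0 ▸ hle (Fin.zero_le n)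
  let X : Fin d → Fin m → Ω → ℕ := fun i n ω => M i (ts n.succ i) ω - M i (ts n.castSucc i) ω
  have mX : ∀ i n, Measurable (X i n) := fun i n => (mM _ _).sub (mM _ _)
  have hrow : ∀ i, iIndepFun (X i) μ := fun i =>
    (hinc i).iIndepFun_of_le_succ (mM i) (fun n => ts n i) (by simp [h0])
      fun n => hle n.castSucc_le_succ i
  have hblock : iIndepFun (fun i ω n => X i n ω) μ :=
    hindep.comp (fun i f (n : Fin m) => f (ts n.succ i) - f (ts n.castSucc i)) fun i =>
      measurable_pi_lambda _ fun n => (measurable_pi_apply _).sub (measurable_pi_apply _)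
  have hcols := (iIndepFun.transpose mX hblock hrow).comp (fun _ v => ∑ i, v i)
    fun _ => measurable_of_countable _
  convert hcols using 3 with n ω
  exact sum_sub_sum_eq_sum_sub hcount (hnonneg _) (hle n.castSucc_le_succ) ω

lemma hasStatIncrements_sum (mM : ∀ i s, Measurable (M i s)) (hcount : ∀ i, IsCounting1 (M i))
    (hindep : iIndepFun (fun i ω s => M i s ω) μ) (hstat : ∀ i, HasStatIncrements1 μ (M i)) :
    HasStatIncrements μ d fun t ω => ∑ i, M i (t i) ω := by
  intro s t hs hst
  let ν i := μ.map (M i (t i - s i))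
  have hdiff : HasLaw (fun ω i => M i (t i) ω - M i (s i) ω) (Measure.pi ν) μ :=
    iIndepFun.hasLaw_pi
      (fun i => ⟨((mM _ _).sub (mM _ _)).aemeasurable, hstat i _ _ (hs i) (hst i)⟩)
      (hindep.comp (fun i f => f (t i) - f (s i)) fun i =>
        (measurable_pi_apply _).sub (measurable_pi_apply _))
  have hshift : HasLaw (fun ω i => M i (t i - s i) ω) (Measure.pi ν) μ :=
    iIndepFun.hasLaw_pi (fun i => ⟨(mM _ _).aemeasurable, rfl⟩)
      (hindep.comp (fun i f => f (t i - s i)) fun i => measurable_pi_apply _)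
  have hsum : HasLaw (fun v : Fin d → ℕ => ∑ i, v i) ((Measure.pi ν).map fun v => ∑ i, v i)
      (Measure.pi ν) := ⟨(measurable_of_countable _).aemeasurable, rfl⟩
  rw [funext (sum_sub_sum_eq_sum_sub hcount hs hst)]
  exact (hsum.comp hdiff).map_eq.trans (hsum.comp hshift).map_eq.symm

lemma measure_sum_eq_ofReal_gcpPmf {k : ℕ} {lam : Fin k → Fin d → ℝ} (hlam : ∀ j i, 0 ≤ lam j i)
    (mM : ∀ i s, Measurable (M i s)) (hindep : iIndepFun (fun i ω s => M i s ω) μ)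
    (hlaw : ∀ i s, 0 ≤ s → ∀ n,
      μ {ω | M i s ω = n} = ENNReal.ofReal (gcp1Pmf k (fun j => lam j i) n s))
    {t : Fin d → ℝ} (ht : 0 ≤ t) (n : ℕ) :
    μ {ω | ∑ i, M i (t i) ω = n} = ENNReal.ofReal (gcpPmf d k lam n t) := by
  have hrate : ∀ j i, 0 ≤ lam j i * t i := fun j i => mul_nonneg (hlam j i) (ht i)
  have hsum := (hindep.comp (fun i f => f (t i)) fun i => measurable_pi_apply _)
    |>.hasLaw_sum_gcpMeasure fun i => (hasLaw_iff_forall_measure_eq (mM i (t i))).2 fun n => by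
      rw [hlaw i _ (ht i) n, ofReal_gcp1Pmf fun j => hrate j i]
  rw [ofReal_gcpPmf hrate]
  exact (hasLaw_iff_forall_measure_eq (Finset.measurable_sum _ fun i _ => mM i (t i))).1 hsum n

end SumOfProcesses

theorem sum_isMultiGCP_iff_forall_isGCP_general
    {Ω : Type*} [MeasurableSpace Ω] (μ : Measure Ω)
    (d k : ℕ)
    (lam : Fin k → Fin d → ℝ) (hlam : ∀ j i, 0 < lam j i)
    (M : Fin d → ℝ → Ω → ℕ)
    (hmeas : ∀ i s, Measurable (M i s))
    (hcount : ∀ i, IsCounting1 (M i))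
    (hindep : iIndepFun
      (fun (i : Fin d) (ω : Ω) (s : ℝ) => M i s ω) μ) :
    IsMultiGCP μ d k lam (fun t ω => ∑ i, M i (t i) ω)
    ↔ ∀ i : Fin d, IsGCP μ k (fun j => lam j i) (M i) := by
  constructor
  · intro h i
    have hM : M i = fun s ω => ∑ i', M i' ((Pi.single i s : Fin d → ℝ) i') ω :=
      funext₂ fun s ω => (sum_apply_single_eq (fun i => (hcount i).1) i s ω).symm
    rw [hM]
    exact h.isGCP_single i
  · intro h
    exact ⟨isMultiCounting_sum hcount,
      hasIndepIncrements_sum hmeas hcount hindep fun i => (h i).2.1,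
      hasStatIncrements_sum hmeas hcount hindep fun i => (h i).2.2.1,
      fun _ ht => measure_sum_eq_ofReal_gcpPmf (fun j i => (hlam j i).le) hmeas hindep
        (fun i => (h i).2.2.2) ht⟩

/-- Let `M_1,…,M_d` be independent one-parameter counting processes. The multiparameter
process `𝓜(t) = M_1(t_1) + ⋯ + M_d(t_d)` is a multiparameter GCP with transition rates
`Λ_1,…,Λ_k` if and only if for each `i = 1,…,d` the process `M_i` is a GCP with positive
rates `λ_{1i},…,λ_{ki}`. -/
theorem sum_isMultiGCP_iff_forall_isGCP
    {Ω : Type*} [MeasurableSpace Ω] (μ : Measure Ω) [IsProbabilityMeasure μ]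
    (d k : ℕ) (hd : 1 ≤ d) (hk : 1 ≤ k)
    (lam : Fin k → Fin d → ℝ) (hlam : ∀ j i, 0 < lam j i)
    (M : Fin d → ℝ → Ω → ℕ)
    (hmeas : ∀ i s, Measurable (M i s))
    (hcount : ∀ i, IsCounting1 (M i))
    (hindep : iIndepFun
      (fun (i : Fin d) (ω : Ω) (s : ℝ) => M i s ω) μ) :
    IsMultiGCP μ d k lam (fun t ω => ∑ i, M i (t i) ω)
    ↔ ∀ i : Fin d, IsGCP μ k (fun j => lam j i) (M i) :=
  sum_isMultiGCP_iff_forall_isGCP_general μ d k lam hlam M hmeas hcount hindep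
end

section
/- For all α = (α_1,…,α_d) ∈ (0,1)^d, all w = (w_1,…,w_d) with w_i > 0, and every n ∈ ℕ_0, the following multivariate integral identity holds: ∫_{ℝ_+^d} [ Σ_{(n_1,…,n_k) ∈ Ω(k,n)} ∏_{j=1}^k ((Λ_j·x)^{n_j}/n_j!) e^{−Λ_j·x} ] ∏_{i=1}^d w_i^{α_i−1} e^{−w_i^{α_i} x_i} dx_1 ⋯ dx_d = Σ_{(n_1,…,n_k) ∈ Ω(k,n)} Σ_{(n_{j1},…,n_{jd}) ∈ Θ(n_j,d) for each j = 1,…,k} (∏_{j=1}^k ∏_{i=1}^d λ_{ji}^{n_{ji}}/n_{ji}!) ∏_{i=1}^d w_i^{α_i−1} Γ(Σ_{j=1}^k n_{ji} + 1) / (w_i^{α_i} + Σ_{j=1}^k λ_{ji})^{Σ_{j=1}^k n_{ji} + 1}. -/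
/-!
Expanding each `(Λ_j·x)^{n_j} / n_j!` by the multinomial theorem, and merging the exponentials
`e^{-Λ_j·x}` with the weights `e^{-w_i^{α_i} x_i}` coordinatewise, turns the integrand for fixed
`(n_1, …, n_k)` into a finite sum of products `∏_i x_i^{M_i} e^{-c_i x_i}` with
`c_i = w_i^{α_i} + Σ_j λ_{ji} > 0`. By Fubini each product integrates over the orthant to
`∏_i Γ(M_i + 1) / c_i^{M_i + 1}`. All sums involved are finite, so they commute with the integral.
-/

open MeasureTheory Set Finset Real
open scoped Nat

theorem tsum_ite_eq_sum_of_iff {β α : Type*} [AddCommMonoid α] [TopologicalSpace α]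
    {P : β → Prop} [DecidablePred P] {s : Finset β} (hs : ∀ b, P b ↔ b ∈ s) (f : β → α) :
    ∑' b, (if P b then f b else 0) = ∑ b ∈ s, f b := by
  rw [tsum_eq_sum fun b hb => if_neg ((hs b).not.mpr hb)]
  exact sum_congr rfl fun b hb => if_pos ((hs b).mpr hb)

theorem integral_Ici_pow_mul_exp_neg_mul (M : ℕ) {c : ℝ} (hc : 0 < c) :
    ∫ t in Ici (0 : ℝ), t ^ M * exp (-(c * t)) = Gamma (M + 1) / c ^ (M + 1) := by
  have h := integral_rpow_mul_exp_neg_mul_Ioi (a := M + 1) (by positivity) hc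
  rw [add_sub_cancel_right, one_div, inv_rpow hc.le, ← div_eq_inv_mul, ← Nat.cast_add_one,
    rpow_natCast, Nat.cast_add_one] at h
  rw [integral_Ici_eq_integral_Ioi, ← h]
  exact setIntegral_congr_fun measurableSet_Ioi fun t _ => by simp [← rpow_natCast]

theorem integrableOn_Ici_pow_mul_exp_neg_mul (M : ℕ) {c : ℝ} (hc : 0 < c) :
    IntegrableOn (fun t : ℝ => t ^ M * exp (-(c * t))) (Ici 0) := by
  rw [integrableOn_Ici_iff_integrableOn_Ioi]
  refine (integrableOn_rpow_mul_exp_neg_mul_rpow (p := 1) (s := M)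
    (neg_one_lt_zero.trans_le M.cast_nonneg) one_pos hc).congr_fun (fun t _ => ?_) measurableSet_Ioi
  simp

section PiProd

variable {ι : Type*} [Fintype ι] {X : ι → Type*} {mX : ∀ i, MeasurableSpace (X i)}
  {μ : (i : ι) → Measure (X i)} [∀ i, SigmaFinite (μ i)]

theorem setIntegral_univ_pi_prod (f : (i : ι) → X i → ℝ) (s : (i : ι) → Set (X i)) :
    ∫ x in univ.pi s, ∏ i, f i (x i) ∂Measure.pi μ = ∏ i, ∫ x in s i, f i x ∂μ i := by
  rw [Measure.restrict_pi_pi, integral_fintype_prod_eq_prod]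

theorem integrableOn_univ_pi_prod {f : (i : ι) → X i → ℝ} {s : (i : ι) → Set (X i)}
    (hf : ∀ i, IntegrableOn (f i) (s i) (μ i)) :
    IntegrableOn (fun x => ∏ i, f i (x i)) (univ.pi s) (Measure.pi μ) := by
  rw [IntegrableOn, Measure.restrict_pi_pi]
  exact Integrable.fintype_prod_dep hf

end PiProd

theorem sum_pow_div_factorial {α R : Type*} [DecidableEq α] [Field R] [CharZero R]
    (s : Finset α) (f : α → R) (n : ℕ) :
    (∑ i ∈ s, f i) ^ n / n ! = ∑ m ∈ piAntidiag s n, ∏ i ∈ s, f i ^ m i / (m i)! := by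
  rw [sum_pow_eq_sum_piAntidiag, sum_div]
  refine sum_congr rfl fun m hm => ?_
  obtain ⟨rfl, -⟩ := mem_piAntidiag.mp hm
  have hspec : ((∏ i ∈ s, (m i)! : ℕ) : R) * Nat.multinomial s m = (∑ i ∈ s, m i)! := by
    exact_mod_cast Nat.multinomial_spec s m
  rw [prod_div_distrib, ← hspec]
  push_cast
  have hmultinomial : (Nat.multinomial s m : R) ≠ 0 :=
    Nat.cast_ne_zero.mpr (Nat.multinomial_pos s m).ne'
  have hfactorials : ∏ i ∈ s, ((m i)! : R) ≠ 0 :=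
    prod_ne_zero_iff.mpr fun i _ => Nat.cast_ne_zero.mpr (Nat.factorial_ne_zero _)
  field_simp

theorem prod_sum_mul_pow_div_factorial {ι κ R : Type*} [Fintype ι] [Fintype κ] [DecidableEq ι]
    [DecidableEq κ] [Field R] [CharZero R] (lam : κ → ι → R) (x : ι → R) (y : κ → ℕ) :
    ∏ j, (∑ i, lam j i * x i) ^ y j / (y j)! =
      ∑ m ∈ Fintype.piFinset fun j => piAntidiag univ (y j),
        (∏ j, ∏ i, lam j i ^ m j i / (m j i)!) * ∏ i, x i ^ ∑ j, m j i := by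
  simp_rw [sum_pow_div_factorial, prod_univ_sum]
  refine sum_congr rfl fun m _ => ?_
  simp_rw [mul_pow, mul_div_right_comm, prod_mul_distrib]
  rw [prod_comm (f := fun j i => x i ^ m j i)]
  simp_rw [prod_pow_eq_pow_sum]

section LaplaceTransform

variable {ι κ : Type*} [Fintype ι] [Fintype κ] (lam : κ → ι → ℝ) (a b : ι → ℝ)

theorem prod_exp_neg_mul_prod_exp_neg (x : ι → ℝ) :
    (∏ j, exp (-(∑ i, lam j i * x i))) * ∏ i, (a i * exp (-b i * x i)) =
      ∏ i, (a i * exp (-((b i + ∑ j, lam j i) * x i))) := by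
  simp_rw [prod_mul_distrib, ← exp_sum]
  rw [mul_left_comm, ← exp_add]
  congr 2
  simp_rw [neg_mul, add_mul, sum_mul, neg_add, sum_add_distrib, sum_neg_distrib]
  rw [add_comm, sum_comm]

theorem setIntegral_Ici_prod_mul_pow_mul_exp_neg_mul {c : ι → ℝ} (hc : ∀ i, 0 < c i)
    (M : ι → ℕ) :
    ∫ x in Ici (0 : ι → ℝ), ∏ i, (a i * (x i ^ M i * exp (-(c i * x i)))) =
      ∏ i, (a i * Gamma (M i + 1) / c i ^ (M i + 1)) := by
  rw [← pi_univ_Ici, volume_pi,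
    setIntegral_univ_pi_prod fun i t => a i * (t ^ M i * exp (-(c i * t)))]
  refine prod_congr rfl fun i _ => ?_
  rw [integral_const_mul, Pi.zero_apply, integral_Ici_pow_mul_exp_neg_mul _ (hc i), mul_div_assoc]

theorem integrableOn_Ici_prod_mul_pow_mul_exp_neg_mul {c : ι → ℝ} (hc : ∀ i, 0 < c i)
    (M : ι → ℕ) :
    IntegrableOn (fun x => ∏ i, (a i * (x i ^ M i * exp (-(c i * x i))))) (Ici (0 : ι → ℝ)) := by
  rw [← pi_univ_Ici, volume_pi]
  exact integrableOn_univ_pi_prod fun i =>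
    (integrableOn_Ici_pow_mul_exp_neg_mul (M i) (hc i)).const_mul (a i)

variable [DecidableEq ι] [DecidableEq κ]

theorem prod_poisson_mul_prod_exp_neg_eq_sum (y : κ → ℕ) (x : ι → ℝ) :
    (∏ j, ((∑ i, lam j i * x i) ^ y j / (y j)! * exp (-(∑ i, lam j i * x i)))) *
        ∏ i, (a i * exp (-b i * x i)) =
      ∑ m ∈ Fintype.piFinset fun j => piAntidiag univ (y j),
        (∏ j, ∏ i, lam j i ^ m j i / (m j i)!) *
          ∏ i, (a i * (x i ^ (∑ j, m j i) * exp (-((b i + ∑ j, lam j i) * x i)))) := by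
  rw [prod_mul_distrib, mul_assoc, prod_exp_neg_mul_prod_exp_neg, prod_sum_mul_pow_div_factorial,
    sum_mul]
  refine sum_congr rfl fun m _ => ?_
  rw [mul_assoc, ← prod_mul_distrib]
  simp_rw [mul_left_comm]

variable {lam b}

theorem integrableOn_Ici_prod_poisson_mul_prod_exp_neg (hc : ∀ i, 0 < b i + ∑ j, lam j i)
    (y : κ → ℕ) :
    IntegrableOn (fun x : ι → ℝ => (∏ j, ((∑ i, lam j i * x i) ^ y j / (y j)! *
        exp (-(∑ i, lam j i * x i)))) * ∏ i, (a i * exp (-b i * x i))) (Ici 0) := by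
  simp_rw [prod_poisson_mul_prod_exp_neg_eq_sum]
  exact integrable_finsetSum _ fun m _ =>
    (integrableOn_Ici_prod_mul_pow_mul_exp_neg_mul a hc _).const_mul _

theorem setIntegral_Ici_prod_poisson_mul_prod_exp_neg (hc : ∀ i, 0 < b i + ∑ j, lam j i)
    (y : κ → ℕ) :
    ∫ x in Ici (0 : ι → ℝ), (∏ j, ((∑ i, lam j i * x i) ^ y j / (y j)! *
        exp (-(∑ i, lam j i * x i)))) * ∏ i, (a i * exp (-b i * x i)) =
      ∑ m ∈ Fintype.piFinset fun j => piAntidiag univ (y j),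
        (∏ j, ∏ i, lam j i ^ m j i / (m j i)!) *
          ∏ i, (a i * Gamma ((∑ j, m j i : ℕ) + 1) /
            (b i + ∑ j, lam j i) ^ ((∑ j, m j i) + 1)) := by
  simp_rw [prod_poisson_mul_prod_exp_neg_eq_sum]
  rw [integral_finsetSum _ fun m _ =>
    (integrableOn_Ici_prod_mul_pow_mul_exp_neg_mul a hc _).const_mul _]
  refine sum_congr rfl fun m _ => ?_
  rw [integral_const_mul, setIntegral_Ici_prod_mul_pow_mul_exp_neg_mul a hc]

end LaplaceTransform

/-- `Ω(k, n)`, with `y j` the multiplicity of the part `j + 1`. -/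
def weightedAntidiag (k n : ℕ) : Finset (Fin k → ℕ) :=
  {y ∈ Fintype.piFinset fun _ => range (n + 1) | ∑ j, (j.1 + 1) * y j = n}

theorem mem_weightedAntidiag {k n : ℕ} {y : Fin k → ℕ} :
    y ∈ weightedAntidiag k n ↔ ∑ j, (j.1 + 1) * y j = n := by
  refine mem_filter.trans ⟨And.right, fun h => ⟨Fintype.mem_piFinset.mpr fun j => ?_, h⟩⟩
  have : (j.1 + 1) * y j ≤ n :=
    h ▸ single_le_sum (f := fun j : Fin k => (j.1 + 1) * y j) (fun _ _ => Nat.zero_le _)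
      (mem_univ j)
  exact mem_range.mpr (by nlinarith)

theorem mem_piFinset_piAntidiag_univ {ι κ : Type*} [Fintype ι] [DecidableEq ι] [Fintype κ]
    [DecidableEq κ] {y : κ → ℕ} {m : κ → ι → ℕ} :
    m ∈ Fintype.piFinset (fun j => piAntidiag univ (y j)) ↔ ∀ j, ∑ i, m j i = y j := by
  simp [Fintype.mem_piFinset, mem_piAntidiag]

theorem laplace_transform_fractional_gcp_general (d k : ℕ)
    (lam : Fin k → Fin d → ℝ) (hlam : ∀ j i, 0 < lam j i)
    (alpha : Fin d → ℝ)
    (w : Fin d → ℝ) (hw : ∀ i, 0 < w i) (n : ℕ) :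
    (∫ x in Set.Ici (0 : Fin d → ℝ),
      (∑' y : Fin k → ℕ,
        if (∑ j, (j.1 + 1) * y j) = n then
          ∏ j, ((∑ i, lam j i * x i) ^ (y j) / (Nat.factorial (y j)) *
            Real.exp (-(∑ i, lam j i * x i)))
        else 0) *
      ∏ i, (w i ^ (alpha i - 1) * Real.exp (-(w i ^ alpha i) * x i)))
    = ∑' y : Fin k → ℕ,
        if (∑ j, (j.1 + 1) * y j) = n then
          ∑' m : Fin k → Fin d → ℕ,
            if (∀ j, (∑ i, m j i) = y j) then
              (∏ j, ∏ i, lam j i ^ (m j i) / (Nat.factorial (m j i))) *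
                ∏ i, (w i ^ (alpha i - 1) *
                  Real.Gamma ((∑ j, m j i : ℕ) + 1) /
                  (w i ^ alpha i + ∑ j, lam j i) ^ ((∑ j, m j i) + 1))
            else 0
        else 0 := by
  have hc : ∀ i, 0 < w i ^ alpha i + ∑ j, lam j i := fun i =>
    add_pos_of_pos_of_nonneg (rpow_pos_of_pos (hw i) _) (sum_nonneg fun j _ => (hlam j i).le)
  simp_rw [tsum_ite_eq_sum_of_iff fun _ => mem_weightedAntidiag.symm, sum_mul]
  rw [integral_finsetSum _ fun y _ => integrableOn_Ici_prod_poisson_mul_prod_exp_neg _ hc y]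
  refine sum_congr rfl fun y _ => ?_
  rw [tsum_ite_eq_sum_of_iff fun _ => (mem_piFinset_piAntidiag_univ (y := y)).symm]
  exact setIntegral_Ici_prod_poisson_mul_prod_exp_neg _ hc y

/-- The Laplace transform (in the time variables) of the distribution of the multiparameter
fractional GCP: for all `α ∈ (0,1)^d`, all `w` with `w_i > 0`, and every `n ∈ ℕ_0`,
`∫_{ℝ_+^d} [Σ_{(n_1,…,n_k) ∈ Ω(k,n)} ∏_j ((Λ_j·x)^{n_j}/n_j!) e^{−Λ_j·x}]
  ∏_i w_i^{α_i−1} e^{−w_i^{α_i} x_i} dx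
 = Σ_{(n_1,…,n_k) ∈ Ω(k,n)} Σ_{(n_{j1},…,n_{jd}) ∈ Θ(n_j,d), j=1,…,k}
   (∏_j ∏_i λ_{ji}^{n_{ji}}/n_{ji}!) ∏_i w_i^{α_i−1} Γ(Σ_j n_{ji} + 1)
   / (w_i^{α_i} + Σ_j λ_{ji})^{Σ_j n_{ji} + 1}`. -/
theorem laplace_transform_fractional_gcp (d k : ℕ) (hd : 1 ≤ d) (hk : 1 ≤ k)
    (lam : Fin k → Fin d → ℝ) (hlam : ∀ j i, 0 < lam j i)
    (alpha : Fin d → ℝ) (halpha : ∀ i, alpha i ∈ Set.Ioo (0 : ℝ) 1)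
    (w : Fin d → ℝ) (hw : ∀ i, 0 < w i) (n : ℕ) :
    (∫ x in Set.Ici (0 : Fin d → ℝ),
      (∑' y : Fin k → ℕ,
        if (∑ j, (j.1 + 1) * y j) = n then
          ∏ j, ((∑ i, lam j i * x i) ^ (y j) / (Nat.factorial (y j)) *
            Real.exp (-(∑ i, lam j i * x i)))
        else 0) *
      ∏ i, (w i ^ (alpha i - 1) * Real.exp (-(w i ^ alpha i) * x i)))
    = ∑' y : Fin k → ℕ,
        if (∑ j, (j.1 + 1) * y j) = n then
          ∑' m : Fin k → Fin d → ℕ,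
            if (∀ j, (∑ i, m j i) = y j) then
              (∏ j, ∏ i, lam j i ^ (m j i) / (Nat.factorial (m j i))) *
                ∏ i, (w i ^ (alpha i - 1) *
                  Real.Gamma ((∑ j, m j i : ℕ) + 1) /
                  (w i ^ alpha i + ∑ j, lam j i) ^ ((∑ j, m j i) + 1))
            else 0
        else 0 :=
  laplace_transform_fractional_gcp_general d k lam hlam alpha w hw n
end

section
/- For all α = (α_1,…,α_d) ∈ (0,1)^d, t ∈ ℝ_+^d and n ∈ ℕ_0, the multiparameter fractional GCP distribution equals the d-fold convolution of one-parameter generalized fractional counting process distributions: p_α(n,t) = Σ_{(n_1,…,n_d) ∈ Θ(n,d)} ∏_{i=1}^d q_{α_i}(n_i, t_i), where q_{α_i}(m, s) = Σ_{(m_1,…,m_k) ∈ Ω(k,m)} (Σ_{j=1}^k m_j)! (∏_{j=1}^k (λ_{ji} s^{α_i})^{m_j}/m_j!) E^{Σ_{j=1}^k m_j + 1}_{α_i, α_i Σ_{j=1}^k m_j + 1}(−s^{α_i} Σ_{j=1}^k λ_{ji}). -/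
open scoped BigOperators

/-- The three-parameter Mittag-Leffler function
`E^γ_{α,β}(x) = Σ_{r=0}^∞ Γ(r+γ) x^r / (Γ(γ) r! Γ(rα+β))`. -/
noncomputable def ml3 (a b c x : ℝ) : ℝ :=
  ∑' r : ℕ, Real.Gamma (r + c) * x ^ r /
    (Real.Gamma c * (Nat.factorial r) * Real.Gamma (r * a + b))

/-- The distribution of the multiparameter fractional GCP:
`p_α(n,t) = Σ_{(n_1,…,n_k) ∈ Ω(k,n)} Σ_{(n_{j1},…,n_{jd}) ∈ Θ(n_j,d), j = 1,…,k}
  ∏_i (Σ_j n_{ji})! (∏_j (λ_{ji} t_i^{α_i})^{n_{ji}}/n_{ji}!)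
       E^{Σ_j n_{ji}+1}_{α_i, α_i Σ_j n_{ji}+1}(−t_i^{α_i} Σ_j λ_{ji})`. -/
noncomputable def pFrac (d k : ℕ) (lam : Fin k → Fin d → ℝ) (alpha : Fin d → ℝ)
    (n : ℕ) (t : Fin d → ℝ) : ℝ :=
  ∑' y : Fin k → ℕ,
    if (∑ j, (j.1 + 1) * y j) = n then
      ∑' m : Fin k → Fin d → ℕ,
        if (∀ j, (∑ i, m j i) = y j) then
          ∏ i, ((Nat.factorial (∑ j, m j i) : ℝ) *
            (∏ j, (lam j i * t i ^ alpha i) ^ (m j i) / (Nat.factorial (m j i))) *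
            ml3 (alpha i) (alpha i * (∑ j, m j i) + 1) ((∑ j, m j i) + 1)
              (-(t i ^ alpha i) * ∑ j, lam j i))
        else 0
    else 0

/-- The distribution of the one-parameter generalized fractional counting process with
rates `λ_1,…,λ_k` and fractional index `α`:
`q_α(m,s) = Σ_{(m_1,…,m_k) ∈ Ω(k,m)} (Σ_j m_j)! (∏_j (λ_j s^α)^{m_j}/m_j!)
  E^{Σ_j m_j+1}_{α, α Σ_j m_j+1}(−s^α Σ_j λ_j)`. -/
noncomputable def gfcpPmf (k : ℕ) (lamv : Fin k → ℝ) (a : ℝ) (m : ℕ) (s : ℝ) : ℝ :=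
  ∑' x : Fin k → ℕ,
    if (∑ j, (j.1 + 1) * x j) = m then
      (Nat.factorial (∑ j, x j) : ℝ) *
        (∏ j, (lamv j * s ^ a) ^ (x j) / (Nat.factorial (x j))) *
        ml3 a (a * (∑ j, x j) + 1) ((∑ j, x j) + 1) (-(s ^ a) * ∑ j, lamv j)
    else 0

lemma prod_ite_zero' {ι : Type*} [Fintype ι] (c : ι → Prop) [DecidablePred c] (a : ι → ℝ) :
    (∏ i, if c i then a i else 0) = if (∀ i, c i) then ∏ i, a i else 0 := by
  by_cases h : ∀ i, c i
  · rw [if_pos h]; exact Finset.prod_congr rfl fun i _ => if_pos (h i)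
  · rw [if_neg h]; push_neg at h; obtain ⟨i, hi⟩ := h
    exact Finset.prod_eq_zero (Finset.mem_univ i) (if_neg hi)

lemma key (d k n : ℕ) (F : Fin d → (Fin k → ℕ) → ℝ) :
    (∑' y : Fin k → ℕ,
      if (∑ j, (j.1 + 1) * y j) = n then
        ∑' m : Fin k → Fin d → ℕ,
          if (∀ j, (∑ i, m j i) = y j) then ∏ i, F i (fun j => m j i) else 0
      else 0)
    = ∑' μ : Fin d → ℕ,
        if (∑ i, μ i) = n then
          ∏ i, (∑' x : Fin k → ℕ, if (∑ j, (j.1 + 1) * x j) = μ i then F i x else 0)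
        else 0 := by
  classical
  set S : Finset (Fin k → ℕ) := Fintype.piFinset fun _ => Finset.range (n+1) with hS
  set Sd : Finset (Fin d → ℕ) := Fintype.piFinset fun _ => Finset.range (n+1) with hSd
  set T : Finset (Fin k → Fin d → ℕ) :=
    Fintype.piFinset fun _ => Fintype.piFinset fun _ => Finset.range (n+1) with hT
  set G : Finset (Fin d → Fin k → ℕ) := Fintype.piFinset fun _ => S with hG
  have hmemS : ∀ y : Fin k → ℕ, (∑ j, (j.1 + 1) * y j) = n → y ∈ S := by
    intro y h
    rw [hS, Fintype.mem_piFinset]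
    intro j
    rw [Finset.mem_range, Nat.lt_succ_iff]
    calc y j ≤ (j.1 + 1) * y j := Nat.le_mul_of_pos_left _ j.1.succ_pos
      _ ≤ ∑ j, (j.1 + 1) * y j :=
        Finset.single_le_sum (f := fun j : Fin k => (j.1 + 1) * y j) (fun _ _ => Nat.zero_le _) (Finset.mem_univ j)
      _ = n := h
  have hmemSd : ∀ μ : Fin d → ℕ, (∑ i, μ i) = n → μ ∈ Sd := by
    intro μ h
    rw [hSd, Fintype.mem_piFinset]
    intro i
    rw [Finset.mem_range, Nat.lt_succ_iff]
    calc μ i ≤ ∑ i, μ i :=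
        Finset.single_le_sum (fun _ _ => Nat.zero_le _) (Finset.mem_univ i)
      _ = n := h
  -- LHS as finite sum
  have L : (∑' y : Fin k → ℕ,
      if (∑ j, (j.1 + 1) * y j) = n then
        ∑' m : Fin k → Fin d → ℕ,
          if (∀ j, (∑ i, m j i) = y j) then ∏ i, F i (fun j => m j i) else 0
      else 0)
      = ∑ m ∈ T, if (∑ j, (j.1 + 1) * (∑ i, m j i)) = n
          then ∏ i, F i (fun j => m j i) else 0 := by
    rw [tsum_eq_sum (s := S) (by
      intro y hy
      rw [if_neg]
      exact fun h => hy (hmemS y h))]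
    have step : ∀ y ∈ S,
        (if (∑ j, (j.1 + 1) * y j) = n then
          ∑' m : Fin k → Fin d → ℕ,
            if (∀ j, (∑ i, m j i) = y j) then ∏ i, F i (fun j => m j i) else 0
        else 0)
        = ∑ m ∈ T, if ((∑ j, (j.1 + 1) * y j) = n ∧ (∀ j, (∑ i, m j i) = y j))
            then ∏ i, F i (fun j => m j i) else 0 := by
      intro y _
      by_cases hP : (∑ j, (j.1 + 1) * y j) = n
      · rw [if_pos hP]
        rw [tsum_eq_sum (s := T) (by
          intro m hm
          rw [if_neg]
          intro hQ
          apply hm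
          rw [hT, Fintype.mem_piFinset]
          intro j
          rw [Fintype.mem_piFinset]
          intro i
          rw [Finset.mem_range, Nat.lt_succ_iff]
          calc m j i ≤ ∑ i, m j i :=
              Finset.single_le_sum (fun _ _ => Nat.zero_le _) (Finset.mem_univ i)
            _ = y j := hQ j
            _ ≤ n := by
              have := (Fintype.mem_piFinset.mp (hmemS y hP)) j
              rwa [Finset.mem_range, Nat.lt_succ_iff] at this)]
        exact Finset.sum_congr rfl fun m _ => by simp [hP]
      · rw [if_neg hP]
        symm
        exact Finset.sum_eq_zero fun m _ => if_neg (fun h => hP h.1)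
    rw [Finset.sum_congr rfl step, Finset.sum_comm]
    refine Finset.sum_congr rfl fun m _ => ?_
    rw [Finset.sum_eq_single (fun j => ∑ i, m j i)]
    · simp
    · intro y _ hyne
      rw [if_neg]
      rintro ⟨-, hQ⟩
      exact hyne (funext fun j => (hQ j).symm)
    · intro h0
      rw [if_neg]
      rintro ⟨hP, -⟩
      exact h0 (hmemS _ hP)
  -- RHS as finite sum
  have Rr : (∑' μ : Fin d → ℕ,
        if (∑ i, μ i) = n then
          ∏ i, (∑' x : Fin k → ℕ, if (∑ j, (j.1 + 1) * x j) = μ i then F i x else 0)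
        else 0)
      = ∑ g ∈ G, if (∑ i, ∑ j, (j.1 + 1) * g i j) = n then ∏ i, F i (g i) else 0 := by
    rw [tsum_eq_sum (s := Sd) (by
      intro μ hμ
      rw [if_neg]
      exact fun h => hμ (hmemSd μ h))]
    have step : ∀ μ ∈ Sd,
        (if (∑ i, μ i) = n then
          ∏ i, (∑' x : Fin k → ℕ, if (∑ j, (j.1 + 1) * x j) = μ i then F i x else 0)
        else 0)
        = ∑ g ∈ G, if ((∑ i, μ i) = n ∧ (∀ i, (∑ j, (j.1 + 1) * g i j) = μ i))
            then ∏ i, F i (g i) else 0 := by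
      intro μ _
      by_cases hP : (∑ i, μ i) = n
      · rw [if_pos hP]
        have hμle : ∀ i, μ i ≤ n := fun i => by
          have := (Fintype.mem_piFinset.mp (hmemSd μ hP)) i
          rwa [Finset.mem_range, Nat.lt_succ_iff] at this
        have hq : ∀ i : Fin d,
            (∑' x : Fin k → ℕ, if (∑ j, (j.1 + 1) * x j) = μ i then F i x else 0)
            = ∑ x ∈ S, if (∑ j, (j.1 + 1) * x j) = μ i then F i x else 0 := by
          intro i
          refine tsum_eq_sum ?_
          intro x hx
          rw [if_neg]
          intro hc
          apply hx
          rw [hS, Fintype.mem_piFinset]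
          intro j
          rw [Finset.mem_range, Nat.lt_succ_iff]
          calc x j ≤ (j.1 + 1) * x j := Nat.le_mul_of_pos_left _ j.1.succ_pos
            _ ≤ ∑ j, (j.1 + 1) * x j :=
              Finset.single_le_sum (f := fun j : Fin k => (j.1 + 1) * x j) (fun _ _ => Nat.zero_le _) (Finset.mem_univ j)
            _ = μ i := hc
            _ ≤ n := hμle i
        calc (∏ i, (∑' x : Fin k → ℕ, if (∑ j, (j.1 + 1) * x j) = μ i then F i x else 0))
            = ∏ i, ∑ x ∈ S, (if (∑ j, (j.1 + 1) * x j) = μ i then F i x else 0) :=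
              Finset.prod_congr rfl fun i _ => hq i
          _ = ∑ g ∈ G, ∏ i, (if (∑ j, (j.1 + 1) * g i j) = μ i then F i (g i) else 0) :=
              Finset.prod_univ_sum _ _
          _ = ∑ g ∈ G, if ((∑ i, μ i) = n ∧ (∀ i, (∑ j, (j.1 + 1) * g i j) = μ i))
              then ∏ i, F i (g i) else 0 := by
              refine Finset.sum_congr rfl fun g _ => ?_
              rw [prod_ite_zero']
              simp [hP]
      · rw [if_neg hP]
        symm
        exact Finset.sum_eq_zero fun g _ => if_neg (fun h => hP h.1)
    rw [Finset.sum_congr rfl step, Finset.sum_comm]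
    refine Finset.sum_congr rfl fun g _ => ?_
    rw [Finset.sum_eq_single (fun i => ∑ j, (j.1 + 1) * g i j)]
    · simp
    · intro μ _ hμne
      rw [if_neg]
      rintro ⟨-, hQ⟩
      exact hμne (funext fun i => (hQ i).symm)
    · intro h0
      rw [if_neg]
      rintro ⟨hP, -⟩
      exact h0 (hmemSd _ hP)
  rw [L, Rr]
  refine Finset.sum_nbij' (fun m => fun i j => m j i) (fun g => fun j i => g i j)
    ?_ ?_ ?_ ?_ ?_
  · intro m hm
    rw [hG, Fintype.mem_piFinset]
    intro i
    rw [hS, Fintype.mem_piFinset]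
    intro j
    have := Fintype.mem_piFinset.mp (Fintype.mem_piFinset.mp hm j) i
    exact this
  · intro g hg
    rw [hT, Fintype.mem_piFinset]
    intro j
    rw [Fintype.mem_piFinset]
    intro i
    exact Fintype.mem_piFinset.mp (Fintype.mem_piFinset.mp hg i) j
  · intro m _; rfl
  · intro g _; rfl
  · intro m _
    have hcond : (∑ j, (j.1 + 1) * (∑ i, m j i)) = ∑ i, ∑ j, (j.1 + 1) * m j i := by
      simp_rw [Finset.mul_sum]
      exact Finset.sum_comm
    rw [hcond]


/-- For all `α ∈ (0,1)^d`, `t ∈ ℝ_+^d` and `n ∈ ℕ_0`, the multiparameter fractional GCP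
distribution equals the `d`-fold convolution of one-parameter generalized fractional
counting process distributions:
`p_α(n,t) = Σ_{(n_1,…,n_d) ∈ Θ(n,d)} ∏_{i=1}^d q_{α_i}(n_i, t_i)`. -/
theorem pFrac_eq_conv_gfcp (d k : ℕ) (hd : 1 ≤ d) (hk : 1 ≤ k)
    (lam : Fin k → Fin d → ℝ) (hlam : ∀ j i, 0 < lam j i)
    (alpha : Fin d → ℝ) (halpha : ∀ i, alpha i ∈ Set.Ioo (0 : ℝ) 1)
    (t : Fin d → ℝ) (ht : ∀ i, 0 ≤ t i) (n : ℕ) :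
    pFrac d k lam alpha n t
      = ∑' m : Fin d → ℕ,
          if (∑ i, m i) = n then
            ∏ i, gfcpPmf k (fun j => lam j i) (alpha i) (m i) (t i)
          else 0 := by
  exact key d k n (fun i v =>
    (Nat.factorial (∑ j, v j) : ℝ) *
      (∏ j, (lam j i * t i ^ alpha i) ^ (v j) / (Nat.factorial (v j))) *
      ml3 (alpha i) (alpha i * (∑ j, v j) + 1) ((∑ j, v j) + 1)
        (-(t i ^ alpha i) * ∑ j, lam j i))
end

section
/- For every i ∈ {1,…,d}, every n ∈ ℕ_0 and every t ∈ ℝ_+^d, the multiparameter GCP distribution satisfies the system of differential equations ∂/∂t_i p(n,t) = −Σ_{j=1}^k λ_{ji} (p(n,t) − p(n−j,t)), where p(m,t) := 0 for m < 0, with initial conditions p(0,0) = 1 and p(n,0) = 0 for n ≥ 1. -/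
/-!
Write `u_j = Λ_j·t` and `π_m(u) = u^m e^{-u} / m!`, so that
`p(n,t) = Σ_{x ∈ Ω(k,n)} ∏_j π_{x_j}(u_j)` is a finite sum. Since `π_m' = π_{m-1} - π_m`
(with `π_{-1} = 0`) and `∂u_j/∂t_i = λ_{ji}`, the product rule gives
`∂p(n,t)/∂t_i = Σ_j λ_{ji} (S_j - p(n,t))`, where `S_j` is the sum over `x ∈ Ω(k,n)` of the
product with `π_{x_j}` replaced by `π_{x_j - 1}`. The shift `x ↦ x - e_j` identifies `S_j` with
`p(n - j, t)`. At `t = 0` only `x = 0` contributes, and `0 ∈ Ω(k,n)` iff `n = 0`.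
-/

open scoped BigOperators

/-- `p(m,t)` extended to integer arguments by `p(m,t) = 0` for `m < 0`. -/
noncomputable def gcpPmfZ (d k : ℕ) (lam : Fin k → Fin d → ℝ) (m : ℤ) (t : Fin d → ℝ) : ℝ :=
  if 0 ≤ m then gcpPmf d k lam m.toNat t else 0

section

open Finset Nat

def gcpWeight {k : ℕ} (x : Fin k → ℕ) : ℕ := ∑ j, (j.1 + 1) * x j

lemma gcpWeight_add {k : ℕ} (x y : Fin k → ℕ) : gcpWeight (x + y) = gcpWeight x + gcpWeight y := by
  simp only [gcpWeight, Pi.add_apply, mul_add, sum_add_distrib]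

lemma gcpWeight_single {k : ℕ} (j : Fin k) : gcpWeight (Pi.single j 1) = j.1 + 1 := by
  simp [gcpWeight, Pi.single_apply]

lemma le_gcpWeight {k : ℕ} (x : Fin k → ℕ) (j : Fin k) : x j ≤ gcpWeight x :=
  calc x j ≤ (j.1 + 1) * x j := Nat.le_mul_of_pos_left _ j.1.succ_pos
    _ ≤ gcpWeight x := single_le_sum (f := fun j => (j.1 + 1) * x j) (by simp) (mem_univ j)

def gcpOmega (k n : ℕ) : Finset (Fin k → ℕ) :=
  (Fintype.piFinset fun _ => range (n + 1)).filter (gcpWeight · = n)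

lemma mem_gcpOmega {k n : ℕ} {x : Fin k → ℕ} : x ∈ gcpOmega k n ↔ gcpWeight x = n := by
  refine ⟨fun hx => (mem_filter.1 hx).2, fun hx => mem_filter.2 ⟨?_, hx⟩⟩
  exact Fintype.mem_piFinset.2 fun j => mem_range_succ_iff.2 (hx ▸ le_gcpWeight x j)

lemma sub_single_add_single {ι : Type*} [DecidableEq ι] {x : ι → ℕ} {j : ι} (hx : x j ≠ 0) :
    x - Pi.single j 1 + Pi.single j 1 = x := by
  funext l
  rcases eq_or_ne l j with rfl | hl
  · simp only [Pi.add_apply, Pi.sub_apply, Pi.single_eq_same]; omega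
  · simp [hl]

/-- `x ↦ x - e_j` is a bijection from `{x ∈ Ω(k,n) | x j ≠ 0}` onto `Ω(k, n - (j+1))`. -/
lemma sum_gcpOmega_eq_ite {M : Type*} [AddCommMonoid M] {k : ℕ} (n : ℕ) (j : Fin k)
    {g : (Fin k → ℕ) → M} (hg : ∀ x, x j = 0 → g x = 0) :
    ∑ x ∈ gcpOmega k n, g x =
      if j.1 + 1 ≤ n then ∑ y ∈ gcpOmega k (n - (j.1 + 1)), g (y + Pi.single j 1) else 0 := by
  have hweight {x : Fin k → ℕ} (hx : x j ≠ 0) :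
      gcpWeight x = gcpWeight (x - Pi.single j 1) + (j.1 + 1) := by
    conv_lhs => rw [← sub_single_add_single hx]
    rw [gcpWeight_add, gcpWeight_single]
  rw [← sum_filter_of_ne (p := fun x => x j ≠ 0) fun x _ hgx hxj => hgx (hg x hxj)]
  split_ifs with hjn
  · refine sum_nbij' (· - Pi.single j 1) (· + Pi.single j 1) ?_ ?_ ?_ ?_ ?_
    · intro x hx
      rw [mem_filter, mem_gcpOmega] at hx
      rw [mem_gcpOmega]
      have := hweight hx.2
      omega
    · intro y hy
      rw [mem_gcpOmega] at hy
      rw [mem_filter, mem_gcpOmega, gcpWeight_add, gcpWeight_single]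
      simp only [Pi.add_apply, Pi.single_eq_same]
      omega
    · intro x hx
      exact sub_single_add_single (mem_filter.1 hx).2
    · intro y _
      exact add_tsub_cancel_right y _
    · intro x hx
      rw [sub_single_add_single (mem_filter.1 hx).2]
  · refine sum_eq_zero fun x hx => ?_
    obtain ⟨hxn, hxj⟩ := mem_filter.1 hx
    have := hweight hxj
    rw [mem_gcpOmega] at hxn
    omega

noncomputable def poissonTerm (m : ℕ) (u : ℝ) : ℝ := u ^ m / m ! * Real.exp (-u)

noncomputable def poissonTermPred : ℕ → ℝ → ℝ
  | 0, _ => 0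
  | m + 1, u => poissonTerm m u

lemma hasDerivAt_poissonTerm (m : ℕ) (u : ℝ) :
    HasDerivAt (poissonTerm m) (poissonTermPred m u - poissonTerm m u) u := by
  have hexp : HasDerivAt (fun v => Real.exp (-v)) (-Real.exp (-u)) u := by
    simpa using (hasDerivAt_neg u).exp
  cases m with
  | zero =>
    convert hexp using 1
    · funext v; simp [poissonTerm]
    · simp [poissonTerm, poissonTermPred]
  | succ m =>
    have hpow : HasDerivAt (fun v : ℝ => v ^ (m + 1) / (m + 1)!) (u ^ m / m !) u := by
      refine ((hasDerivAt_pow (m + 1) u).div_const _).congr_deriv ?_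
      push_cast [factorial_succ, Nat.add_sub_cancel]
      field_simp
    refine (hpow.mul hexp).congr_deriv ?_
    simp only [poissonTerm, poissonTermPred]
    ring

lemma poissonTerm_zero_right (m : ℕ) : poissonTerm m 0 = if m = 0 then 1 else 0 := by
  cases m <;> simp [poissonTerm]

noncomputable def gcpPmfRates (k n : ℕ) (u : Fin k → ℝ) : ℝ :=
  ∑ x ∈ gcpOmega k n, ∏ j, poissonTerm (x j) (u j)

lemma gcpPmfRates_zero_right (k n : ℕ) : gcpPmfRates k n 0 = if n = 0 then 1 else 0 := by
  simp [gcpPmfRates, poissonTerm_zero_right, prod_boole, ← funext_iff, mem_gcpOmega, gcpWeight,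
    eq_comm (a := 0)]

lemma sum_gcpOmega_poissonTermPred_mul_prod {k : ℕ} (n : ℕ) (u : Fin k → ℝ) (j : Fin k) :
    ∑ x ∈ gcpOmega k n, poissonTermPred (x j) (u j) * ∏ l ∈ univ.erase j, poissonTerm (x l) (u l)
      = if j.1 + 1 ≤ n then gcpPmfRates k (n - (j.1 + 1)) u else 0 := by
  rw [sum_gcpOmega_eq_ite n j fun x hx => by simp [hx, poissonTermPred]]
  congr 1
  refine sum_congr rfl fun y _ => ?_
  rw [← mul_prod_erase _ _ (mem_univ j)]
  congr 1
  · simp [poissonTermPred]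
  · exact prod_congr rfl fun l hl => by simp [ne_of_mem_erase hl]

theorem hasDerivAt_gcpPmfRates {k : ℕ} (n : ℕ) {f : Fin k → ℝ → ℝ} {f' : Fin k → ℝ} {s : ℝ}
    (hf : ∀ j, HasDerivAt (f j) (f' j) s) :
    HasDerivAt (fun s => gcpPmfRates k n (f · s))
      (-∑ j, f' j * (gcpPmfRates k n (f · s) -
        if j.1 + 1 ≤ n then gcpPmfRates k (n - (j.1 + 1)) (f · s) else 0)) s := by
  have hterm (x : Fin k → ℕ) := HasDerivAt.fun_finsetProd (u := univ)
    fun j _ => (hasDerivAt_poissonTerm (x j) (f j s)).comp s (hf j)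
  refine (HasDerivAt.fun_sum fun x _ => hterm x).congr_deriv ?_
  have hsplit (x : Fin k → ℕ) (j : Fin k) :
      (∏ l ∈ univ.erase j, poissonTerm (x l) (f l s)) •
          ((poissonTermPred (x j) (f j s) - poissonTerm (x j) (f j s)) * f' j) =
        f' j * (poissonTermPred (x j) (f j s) * ∏ l ∈ univ.erase j, poissonTerm (x l) (f l s) -
          ∏ l, poissonTerm (x l) (f l s)) := by
    rw [← prod_erase_mul _ _ (mem_univ j), smul_eq_mul]
    ring
  simp only [Function.comp_apply, hsplit]
  rw [sum_comm, ← sum_neg_distrib]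
  refine sum_congr rfl fun j _ => ?_
  rw [← mul_sum, sum_sub_distrib, sum_gcpOmega_poissonTermPred_mul_prod n (f · s) j]
  simp only [gcpPmfRates]
  ring

lemma gcpPmf_eq_gcpPmfRates (d k : ℕ) (lam : Fin k → Fin d → ℝ) (n : ℕ) (t : Fin d → ℝ) :
    gcpPmf d k lam n t = gcpPmfRates k n (fun j => ∑ i, lam j i * t i) := by
  refine (tsum_eq_sum (s := gcpOmega k n) fun x hx => if_neg fun h => hx (mem_gcpOmega.2 h)).trans
    (sum_congr rfl fun x hx => if_pos (mem_gcpOmega.1 hx))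

lemma gcpPmf_zero_right (d k : ℕ) (lam : Fin k → Fin d → ℝ) (n : ℕ) :
    gcpPmf d k lam n 0 = if n = 0 then 1 else 0 := by
  rw [gcpPmf_eq_gcpPmfRates, ← gcpPmfRates_zero_right]
  congr 1
  funext j
  simp

lemma hasDerivAt_sum_mul_update {ι : Type*} [Fintype ι] [DecidableEq ι] (c t : ι → ℝ) (i : ι) :
    HasDerivAt (fun s => ∑ l, c l * Function.update t i s l) (c i) (t i) := by
  have h := hasDerivAt_pi.1 (hasDerivAt_update t i (t i))
  refine (HasDerivAt.fun_sum fun l _ => (h l).const_mul (c l)).congr_deriv ?_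
  simp [Pi.single_apply]

lemma gcpPmfZ_natCast_sub (d k : ℕ) (lam : Fin k → Fin d → ℝ) (n m : ℕ) (t : Fin d → ℝ) :
    gcpPmfZ d k lam ((n : ℤ) - m) t = if m ≤ n then gcpPmf d k lam (n - m) t else 0 := by
  rw [gcpPmfZ]
  by_cases h : m ≤ n
  · rw [if_pos (by omega), if_pos h, show ((n : ℤ) - m).toNat = n - m by omega]
  · rw [if_neg (by omega), if_neg h]

end

theorem gcpPmf_pde_general (d k : ℕ) (lam : Fin k → Fin d → ℝ) :
    (∀ (i : Fin d) (n : ℕ) (t : Fin d → ℝ), (∀ i', 0 ≤ t i') →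
      HasDerivAt (fun s : ℝ => gcpPmf d k lam n (Function.update t i s))
        (-∑ j : Fin k, lam j i *
          (gcpPmf d k lam n t - gcpPmfZ d k lam ((n : ℤ) - (j.1 + 1)) t))
        (t i)) ∧
    gcpPmf d k lam 0 0 = 1 ∧
    (∀ n : ℕ, 1 ≤ n → gcpPmf d k lam n 0 = 0) := by
  refine ⟨fun i n t _ => ?_, by simp [gcpPmf_zero_right], fun n hn => ?_⟩
  · have hZ (j : Fin k) : gcpPmfZ d k lam ((n : ℤ) - (j.1 + 1)) t =
        if j.1 + 1 ≤ n then gcpPmf d k lam (n - (j.1 + 1)) t else 0 :=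
      mod_cast gcpPmfZ_natCast_sub d k lam n (j.1 + 1) t
    have h := hasDerivAt_gcpPmfRates n fun j => hasDerivAt_sum_mul_update (lam j) t i
    simp only [Function.update_eq_self, ← gcpPmf_eq_gcpPmfRates] at h
    simpa only [hZ] using h
  · rw [gcpPmf_zero_right, if_neg (by omega)]

/-- For every `i ∈ {1,…,d}`, every `n ∈ ℕ_0` and every `t ∈ ℝ_+^d`, the multiparameter GCP
distribution satisfies `∂/∂t_i p(n,t) = −Σ_{j=1}^k λ_{ji} (p(n,t) − p(n−j,t))`
(with `p(m,t) := 0` for `m < 0`), together with the initial conditions `p(0,0) = 1` and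
`p(n,0) = 0` for `n ≥ 1`. -/
theorem gcpPmf_pde (d k : ℕ) (hd : 1 ≤ d) (hk : 1 ≤ k)
    (lam : Fin k → Fin d → ℝ) (hlam : ∀ j i, 0 < lam j i) :
    (∀ (i : Fin d) (n : ℕ) (t : Fin d → ℝ), (∀ i', 0 ≤ t i') →
      HasDerivAt (fun s : ℝ => gcpPmf d k lam n (Function.update t i s))
        (-∑ j : Fin k, lam j i *
          (gcpPmf d k lam n t - gcpPmfZ d k lam ((n : ℤ) - (j.1 + 1)) t))
        (t i)) ∧
    gcpPmf d k lam 0 0 = 1 ∧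
    (∀ n : ℕ, 1 ≤ n → gcpPmf d k lam n 0 = 0) :=
  gcpPmf_pde_general d k lam
end
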